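/- arXiv:0711.4160 — 6 statements merged into one kernel-verified Lean document; each statement's English description precedes it below -/
import Mathlib

section
/- The constant term in x_1,...,x_n of the Dyson product ∏_{1≤i≠j≤n} (1 - x_i/x_j)^{a_i} equals the multinomial coefficient (a_1+...+a_n)!/(a_1!·a_2!···a_n!). -/
open Finset

noncomputable def Xm {n : ℕ} (v : Fin n → ℤ) : AddMonoidAlgebra ℚ (Fin n → ℤ) :=
  AddMonoidAlgebra.single v 1

noncomputable def dyson {n : ℕ} (a : Fin n → ℕ) : AddMonoidAlgebra ℚ (Fin n → ℤ) :=
  ∏ i : Fin n, ∏ j ∈ Finset.univ.filter (fun j => j ≠ i),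
    (1 - Xm (Pi.single i 1 - Pi.single j 1)) ^ a i

/-- constant term (coefficient of x₁⁰⋯xₙ⁰) of a Laurent polynomial -/
noncomputable def ct {n : ℕ} (f : AddMonoidAlgebra ℚ (Fin n → ℤ)) : ℚ := f.coeff 0

/-!
Good's proof. Write `D_s(a) = ∏_{i ∈ s} P_i^{a_i}` with `P_i = ∏_{j ∈ s, j ≠ i} (1 - x_i/x_j)`.
If some `a_k = 0`, then `x_k` occurs in `D_s(a)` only through `∏_{i ≠ k} (1 - x_i/x_k)^{a_i}`, a
polynomial in `x_k⁻¹` with constant term `1`, so taking the constant term removes `k` from `s`.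
If all `a_i ≥ 1`, Lagrange interpolation of the constant `1` at `0` in the nodes `x_i` gives
`∑_i 1/P_i = 1`, i.e. `∏_i P_i = ∑_i ∏_{l ≠ i} P_l`, hence `D_s(a) = ∑_i D_s(a - e_i)`. The
multinomial coefficients satisfy the same two recursions.
-/

namespace AddMonoidAlgebra

variable (R : Type*) {G : Type*} [Ring R] [AddMonoid G]

def supportedSubring (M : AddSubmonoid G) : Subring (AddMonoidAlgebra R G) where
  carrier := {f | ↑f.coeff.support ⊆ (M : Set G)}
  zero_mem' := by simp
  one_mem' := fun _ hm => Finset.mem_zero.1 (support_coeff_one_subset hm) ▸ M.zero_mem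
  add_mem' {f g} hf hg := by
    classical
    intro m hm
    rcases Finset.mem_union.1 (Finsupp.support_add (coeff_add f g ▸ hm)) with h | h
    exacts [hf h, hg h]
  neg_mem' {f} hf := by simpa [coeff_neg, Finsupp.support_neg] using hf
  mul_mem' {f g} hf hg := by
    classical
    intro m hm
    obtain ⟨u, hu, v, hv, rfl⟩ := Finset.mem_add.1 (support_coeff_mul_subset f g hm)
    exact M.add_mem (hf hu) (hg hv)

variable {R}

lemma single_mem_supportedSubring {M : AddSubmonoid G} {m : G} (hm : m ∈ M) (r : R) :
    single m r ∈ supportedSubring R M := fun _ h =>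
  Finset.mem_singleton.1 (Finsupp.support_single_subset h) ▸ hm

end AddMonoidAlgebra

namespace AddMonoidHom

variable {G : Type*} [AddMonoid G]

def negConeWithZero (φ : G →+ ℤ) : AddSubmonoid G where
  carrier := {v | v = 0 ∨ φ v < 0}
  zero_mem' := Or.inl rfl
  add_mem' {u v} hu hv := by
    rcases hu with rfl | hu
    · simpa using hv
    rcases hv with rfl | hv
    · simpa using Or.inr hu
    exact Or.inr (by rw [map_add]; omega)

end AddMonoidHom

namespace AddMonoidAlgebra

variable {R G : Type*} [Ring R] [AddMonoid G]

lemma coeff_mul_zero_of_nonpos_of_mem_negConeWithZero (φ : G →+ ℤ) {f g : AddMonoidAlgebra R G}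
    (hf : ∀ u ∈ f.coeff.support, φ u ≤ 0) (hg : g ∈ supportedSubring R φ.negConeWithZero) :
    (f * g).coeff 0 = f.coeff 0 * g.coeff 0 := by
  rw [← coeff_mul_add_of_uniqueAdd (a0 := 0) (b0 := 0), add_zero]
  intro u v hu hv huv
  rw [add_zero] at huv
  have hφ : φ u + φ v = 0 := by rw [← map_add, huv, map_zero]
  rcases hg hv with rfl | hv'
  · exact ⟨by simpa using huv, rfl⟩
  · exact absurd (hf u hu) (by omega)

def oneAddNegConeSubmonoid (φ : G →+ ℤ) : Submonoid (AddMonoidAlgebra R G) where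
  carrier := {f | f ∈ supportedSubring R φ.negConeWithZero ∧ f.coeff 0 = 1}
  one_mem' := ⟨one_mem _, coeff_one_zero⟩
  mul_mem' {f g} hf hg := by
    refine ⟨mul_mem hf.1 hg.1, ?_⟩
    rw [coeff_mul_zero_of_nonpos_of_mem_negConeWithZero φ ?_ hg.1, hf.2, hg.2, mul_one]
    intro u hu
    rcases hf.1 hu with rfl | h
    exacts [(map_zero φ).le, h.le]

lemma coeff_mul_zero_of_mem_mker (φ : G →+ ℤ) {f g : AddMonoidAlgebra R G}
    (hf : f ∈ supportedSubring R (AddMonoidHom.mker φ)) (hg : g ∈ oneAddNegConeSubmonoid φ) :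
    (f * g).coeff 0 = f.coeff 0 := by
  rw [coeff_mul_zero_of_nonpos_of_mem_negConeWithZero φ (fun u hu => (hf hu).le) hg.1, hg.2,
    mul_one]

end AddMonoidAlgebra

section LagrangeIdentity

variable {ι : Type*} [DecidableEq ι] {s : Finset ι}

lemma Finset.prod_mul_sum_inv {K : Type*} [Field K] {Q : ι → K} (hQ : ∀ i ∈ s, Q i ≠ 0) :
    (∏ i ∈ s, Q i) * ∑ i ∈ s, (Q i)⁻¹ = ∑ i ∈ s, ∏ l ∈ s.erase i, Q l := by
  rw [Finset.mul_sum]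
  refine Finset.sum_congr rfl fun i hi => ?_
  rw [← Finset.mul_prod_erase s Q hi, mul_comm (Q i), mul_assoc, mul_inv_cancel₀ (hQ i hi), mul_one]

lemma sum_inv_prod_one_sub_div_eq_one {K : Type*} [Field K] (hs : s.Nonempty) {t : ι → K}
    (ht : Set.InjOn t s) (ht0 : ∀ i ∈ s, t i ≠ 0) :
    ∑ i ∈ s, (∏ j ∈ s.erase i, (1 - t i / t j))⁻¹ = 1 := by
  have hbasis := congrArg (Polynomial.eval 0) (Lagrange.sum_basis ht hs)
  rw [Polynomial.eval_finsetSum, Polynomial.eval_one] at hbasis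
  refine Eq.trans ?_ hbasis
  refine Finset.sum_congr rfl fun i hi => ?_
  rw [Lagrange.basis, Polynomial.eval_prod, ← Finset.prod_inv_distrib]
  refine Finset.prod_congr rfl fun j hj => ?_
  have hj' := Finset.mem_of_mem_erase hj
  have hji : t j - t i ≠ 0 := sub_ne_zero.2 fun h => Finset.ne_of_mem_erase hj (ht hj' hi h)
  rw [Lagrange.basisDivisor, Polynomial.eval_mul, Polynomial.eval_C, Polynomial.eval_sub,
    Polynomial.eval_X, Polynomial.eval_C, one_sub_div (ht0 j hj'), inv_div, zero_sub,
    ← neg_sub (t j), inv_neg]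
  field_simp

lemma prod_prod_one_sub_div_eq_sum {K : Type*} [Field K] (hs : s.Nonempty) {t : ι → K}
    (ht : Set.InjOn t s) (ht0 : ∀ i ∈ s, t i ≠ 0) :
    ∏ i ∈ s, ∏ j ∈ s.erase i, (1 - t i / t j) =
      ∑ i ∈ s, ∏ l ∈ s.erase i, ∏ j ∈ s.erase l, (1 - t l / t j) := by
  have hQ : ∀ i ∈ s, ∏ j ∈ s.erase i, (1 - t i / t j) ≠ 0 := by
    intro i hi
    refine Finset.prod_ne_zero_iff.2 fun j hj => ?_
    have hj' := Finset.mem_of_mem_erase hj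
    rw [sub_ne_zero, ne_comm, ne_eq, div_eq_one_iff_eq (ht0 j hj')]
    exact fun h => Finset.ne_of_mem_erase hj (ht hi hj' h).symm
  rw [← Finset.prod_mul_sum_inv hQ, sum_inv_prod_one_sub_div_eq_one hs ht ht0, mul_one]

lemma prod_prod_one_sub_eq_sum {A : Type*} [CommRing A] [IsDomain A] (hs : s.Nonempty)
    {t : ι → A} (ht : Set.InjOn t s) (ht0 : ∀ i ∈ s, t i ≠ 0) {q : ι → ι → A}
    (hq : ∀ i j, q i j * t j = t i) :
    ∏ i ∈ s, ∏ j ∈ s.erase i, (1 - q i j) =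
      ∑ i ∈ s, ∏ l ∈ s.erase i, ∏ j ∈ s.erase l, (1 - q l j) := by
  let φ := algebraMap A (FractionRing A)
  have hφ : Function.Injective φ := IsFractionRing.injective A (FractionRing A)
  have hφq : ∀ i, ∏ j ∈ s.erase i, (1 - φ (q i j)) = ∏ j ∈ s.erase i, (1 - φ (t i) / φ (t j)) :=
    fun i => Finset.prod_congr rfl fun j hj => by
      congr 1
      rw [eq_div_iff ((map_ne_zero_iff φ hφ).2 (ht0 j (Finset.mem_of_mem_erase hj))), ← map_mul, hq]
  apply hφ
  simp only [map_prod, map_sum, map_sub, map_one, hφq]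
  exact prod_prod_one_sub_div_eq_sum hs (t := fun i => φ (t i)) (hφ.comp_injOn ht)
    fun i hi => (map_ne_zero_iff φ hφ).2 (ht0 i hi)

end LagrangeIdentity

lemma Finset.sum_update_pred_add_one {ι : Type*} [DecidableEq ι] {s : Finset ι} {a : ι → ℕ}
    {i : ι} (hi : i ∈ s) (hai : a i ≠ 0) :
    ∑ l ∈ s, Function.update a i (a i - 1) l + 1 = ∑ l ∈ s, a l := by
  rw [Finset.sum_update_of_mem hi, Finset.sdiff_singleton_eq_erase, ← Finset.add_sum_erase s a hi]
  omega

lemma Finset.prod_pow_update_pred {ι M : Type*} [DecidableEq ι] [CommMonoid M] {s : Finset ι}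
    (f : ι → M) {a : ι → ℕ} (ha : ∀ l ∈ s, a l ≠ 0) {i : ι} (hi : i ∈ s) :
    ∏ l ∈ s, f l ^ Function.update a i (a i - 1) l =
      (∏ l ∈ s, f l ^ (a l - 1)) * ∏ l ∈ s.erase i, f l := by
  rw [← Finset.mul_prod_erase s _ hi, ← Finset.mul_prod_erase s _ hi, Function.update_self,
    mul_assoc, ← Finset.prod_mul_distrib]
  congr 1
  refine Finset.prod_congr rfl fun l hl => ?_
  rw [Function.update_of_ne (Finset.ne_of_mem_erase hl),
    pow_sub_one_mul (ha l (Finset.mem_of_mem_erase hl))]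

namespace Nat

variable {ι : Type*} [DecidableEq ι] {s : Finset ι} {a : ι → ℕ} {i : ι}

lemma multinomial_update_pred_mul_sum (hi : i ∈ s) (hai : a i ≠ 0) :
    multinomial s (Function.update a i (a i - 1)) * ∑ l ∈ s, a l = multinomial s a * a i := by
  set a' := Function.update a i (a i - 1) with ha'
  have hsum : ∑ l ∈ s, a l = ∑ l ∈ s, a' l + 1 := (Finset.sum_update_pred_add_one hi hai).symm
  have hfact : ∏ l ∈ s, (a l)! = a i * ∏ l ∈ s, (a' l)! := by
    rw [← Finset.mul_prod_erase s _ hi, ← Finset.mul_prod_erase s _ hi, ha', Function.update_self,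
      ← mul_assoc, Nat.mul_factorial_pred hai]
    congr 1
    exact Finset.prod_congr rfl fun l hl => by rw [Function.update_of_ne (Finset.ne_of_mem_erase hl)]
  apply Nat.eq_of_mul_eq_mul_left (Finset.prod_pos fun l _ => (a' l).factorial_pos)
  calc (∏ l ∈ s, (a' l)!) * (multinomial s a' * ∑ l ∈ s, a l)
      = (∑ l ∈ s, a' l + 1)! := by rw [← mul_assoc, multinomial_spec, hsum, mul_comm,
          Nat.factorial_succ]
    _ = (∏ l ∈ s, (a' l)!) * (multinomial s a * a i) := by
        rw [← hsum, ← multinomial_spec, hfact]; ring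

lemma multinomial_eq_sum_update_pred (hs : s.Nonempty) (ha : ∀ i ∈ s, a i ≠ 0) :
    multinomial s a = ∑ i ∈ s, multinomial s (Function.update a i (a i - 1)) := by
  obtain ⟨i, hi⟩ := hs
  have hS : 0 < ∑ l ∈ s, a l :=
    Finset.sum_pos' (fun _ _ => Nat.zero_le _) ⟨i, hi, Nat.pos_of_ne_zero (ha i hi)⟩
  apply Nat.eq_of_mul_eq_mul_right hS
  rw [Finset.sum_mul, Finset.sum_congr rfl fun i hi => multinomial_update_pred_mul_sum hi (ha i hi),
    Finset.mul_sum]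

lemma multinomial_erase_of_eq_zero {k : ι} (hak : a k = 0) :
    multinomial (s.erase k) a = multinomial s a :=
  multinomial_congr_of_sdiff (Finset.erase_subset k s) (fun l hl => by
    simp only [Finset.mem_sdiff, Finset.mem_erase] at hl
    rwa [show l = k by tauto]) fun _ _ => rfl

end Nat

namespace Dyson

open AddMonoidAlgebra

variable {n : ℕ}

lemma Xm_add (u v : Fin n → ℤ) : Xm (u + v) = Xm u * Xm v := by
  simp [Xm, single_mul_single]

lemma Xm_injective : Function.Injective (Xm (n := n)) :=
  single_left_injective one_ne_zero

lemma Xm_ne_zero (v : Fin n → ℤ) : Xm v ≠ 0 := by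
  simp [Xm]

lemma ct_sum {ι : Type*} (s : Finset ι) (f : ι → AddMonoidAlgebra ℚ (Fin n → ℤ)) :
    ct (∑ i ∈ s, f i) = ∑ i ∈ s, ct (f i) := by
  rw [ct, coeff_sum, Finsupp.finsetSum_apply]
  rfl

noncomputable def factor (s : Finset (Fin n)) (i : Fin n) : AddMonoidAlgebra ℚ (Fin n → ℤ) :=
  ∏ j ∈ s.erase i, (1 - Xm (Pi.single i 1 - Pi.single j 1))

noncomputable def dysonOn (s : Finset (Fin n)) (a : Fin n → ℕ) : AddMonoidAlgebra ℚ (Fin n → ℤ) :=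
  ∏ i ∈ s, factor s i ^ a i

lemma dyson_eq_dysonOn_univ (a : Fin n → ℕ) : dyson a = dysonOn Finset.univ a := by
  simp only [dyson, dysonOn, factor, Finset.prod_pow, Finset.filter_ne', ne_eq]

lemma prod_factor {s : Finset (Fin n)} (hs : s.Nonempty) :
    ∏ i ∈ s, factor s i = ∑ i ∈ s, ∏ l ∈ s.erase i, factor s l :=
  prod_prod_one_sub_eq_sum hs (t := fun i => Xm (Pi.single i 1))
    (fun i _ j _ h => by simpa [Pi.single_apply, eq_comm] using congrFun (Xm_injective h) i)
    (fun i _ => Xm_ne_zero _) fun i j => by rw [← Xm_add, sub_add_cancel]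

lemma dysonOn_eq_sum_update_pred {s : Finset (Fin n)} (hs : s.Nonempty) {a : Fin n → ℕ}
    (ha : ∀ i ∈ s, a i ≠ 0) :
    dysonOn s a = ∑ i ∈ s, dysonOn s (Function.update a i (a i - 1)) := by
  have hpred : dysonOn s a = (∏ i ∈ s, factor s i ^ (a i - 1)) * ∏ i ∈ s, factor s i := by
    rw [dysonOn, ← Finset.prod_mul_distrib]
    exact Finset.prod_congr rfl fun i hi => (pow_sub_one_mul (ha i hi) _).symm
  rw [hpred, prod_factor hs, Finset.mul_sum]
  exact Finset.sum_congr rfl fun i hi => (Finset.prod_pow_update_pred _ ha hi).symm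

lemma dysonOn_eq_mul_of_eq_zero {s : Finset (Fin n)} {a : Fin n → ℕ} {k : Fin n} (hk : k ∈ s)
    (hak : a k = 0) :
    dysonOn s a = dysonOn (s.erase k) a *
      ∏ i ∈ s.erase k, (1 - Xm (Pi.single i 1 - Pi.single k 1)) ^ a i := by
  rw [dysonOn, ← Finset.mul_prod_erase s _ hk, hak, pow_zero, one_mul, dysonOn,
    ← Finset.prod_mul_distrib]
  refine Finset.prod_congr rfl fun i hi => ?_
  have hk' : k ∈ s.erase i := Finset.mem_erase.2 ⟨(Finset.ne_of_mem_erase hi).symm, hk⟩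
  rw [factor, factor, ← Finset.mul_prod_erase _ _ hk', Finset.erase_right_comm, mul_comm, mul_pow]

lemma dysonOn_erase_mem_supportedSubring (s : Finset (Fin n)) (a : Fin n → ℕ) (k : Fin n) :
    dysonOn (s.erase k) a ∈
      supportedSubring ℚ (AddMonoidHom.mker (Pi.evalAddMonoidHom (fun _ => ℤ) k)) := by
  refine prod_mem fun i hi => pow_mem (prod_mem fun j hj => sub_mem (one_mem _)
    (single_mem_supportedSubring ?_ _)) _
  have hik := Finset.ne_of_mem_erase hi
  have hjk := Finset.ne_of_mem_erase (Finset.mem_of_mem_erase hj)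
  simp [hik.symm, hjk.symm]

lemma one_sub_Xm_mem_oneAddNegConeSubmonoid {i k : Fin n} (hik : i ≠ k) :
    1 - Xm (Pi.single i 1 - Pi.single k 1) ∈
      oneAddNegConeSubmonoid (Pi.evalAddMonoidHom (fun _ => ℤ) k) := by
  have hk : (Pi.single i 1 - Pi.single k 1 : Fin n → ℤ) k = -1 := by simp [hik.symm]
  refine ⟨sub_mem (one_mem _) (single_mem_supportedSubring (Or.inr (by simp [hk])) _), ?_⟩
  have hne : (Pi.single i 1 - Pi.single k 1 : Fin n → ℤ) ≠ 0 := fun h => by rw [h] at hk; simp at hk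
  simp [Xm, coeff_sub, hne.symm]

lemma ct_dysonOn_of_eq_zero {s : Finset (Fin n)} {a : Fin n → ℕ} {k : Fin n} (hk : k ∈ s)
    (hak : a k = 0) : ct (dysonOn s a) = ct (dysonOn (s.erase k) a) := by
  rw [dysonOn_eq_mul_of_eq_zero hk hak]
  exact coeff_mul_zero_of_mem_mker _ (dysonOn_erase_mem_supportedSubring s a k)
    (prod_mem fun i hi => pow_mem (one_sub_Xm_mem_oneAddNegConeSubmonoid
      (Finset.ne_of_mem_erase hi)) _)

theorem ct_dysonOn (s : Finset (Fin n)) (a : Fin n → ℕ) :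
    ct (dysonOn s a) = Nat.multinomial s a := by
  rcases s.eq_empty_or_nonempty with rfl | hs
  · simp [dysonOn, ct]
  by_cases hzero : ∃ k ∈ s, a k = 0
  · obtain ⟨k, hk, hak⟩ := hzero
    rw [ct_dysonOn_of_eq_zero hk hak, ct_dysonOn (s.erase k) a,
      Nat.multinomial_erase_of_eq_zero hak]
  · push Not at hzero
    rw [dysonOn_eq_sum_update_pred hs hzero, ct_sum, Nat.multinomial_eq_sum_update_pred hs hzero]
    push_cast
    exact Finset.sum_congr rfl fun i hi => ct_dysonOn s _
termination_by s.card + ∑ i ∈ s, a i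
decreasing_by
  · have := Finset.sum_le_sum_of_subset (f := a) (Finset.erase_subset k s)
    have := Finset.card_erase_lt_of_mem hk
    omega
  · have := Finset.sum_update_pred_add_one hi fun h => hzero ⟨i, hi, h⟩
    omega

end Dyson

theorem dyson_conjecture_general {n : ℕ} (a : Fin n → ℕ) :
    ct (dyson a) = Nat.multinomial Finset.univ a := by
  rw [Dyson.dyson_eq_dysonOn_univ]
  exact Dyson.ct_dysonOn _ _

theorem dyson_conjecture {n : ℕ} (hn : 1 ≤ n) (a : Fin n → ℕ) :
    ct (dyson a) = Nat.multinomial Finset.univ a :=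
  dyson_conjecture_general a
end

section
/- For 3 ≤ i ≤ n, define H_i(a) = a_1 a_i (1+a)/((1+a^{(1)})(2+a^{(1)})(1+a^{(1)}-a_i)) · C_n(a). Then H_i satisfies the recurrence H_i(a) = ∑_{k=1}^n H_i(a - e_k), provided all a_j ≥ 1. -/
/-!
Write `H_i(a) = F(a_1, a_i, a) · C_n(a)` with
`F(x, y, s) = x y (1 + s) / ((1 + s - x)(2 + s - x)(1 + s - x - y))`.
Since `a · C_n(a - e_k) = a_k · C_n(a)`, multiplying the recurrence by `a / C_n(a)` turns it into
`a F(a_1, a_i, a) = ∑_k a_k F((a - e_k)_1, (a - e_k)_i, a - 1)`. Lowering `a_k` changes the first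
argument of `F` only for `k = 1`, the second only for `k = i`, and neither otherwise, so the right
side is `a_1 F(a_1 - 1, a_i, a - 1) + a_i F(a_1, a_i - 1, a - 1) + (a - a_1 - a_i) F(a_1, a_i, a - 1)`,
and the recurrence becomes a rational identity in three variables, whose denominators do not vanish
because `a - a_1 - a_i ≥ a_2 ≥ 1`.
-/

open Finset

theorem Nat.succ_mul_multinomial_update {ι : Type*} [DecidableEq ι] {s : Finset ι} {k : ι}
    (hk : k ∈ s) (b : ι → ℕ) :
    (b k + 1) * Nat.multinomial s (Function.update b k (b k + 1)) =
      (∑ j ∈ s, b j + 1) * Nat.multinomial s b := by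
  have hk' := notMem_erase k s
  have hrest : ∀ j ∈ s.erase k, Function.update b k (b k + 1) j = b j :=
    fun j hj => Function.update_of_ne (ne_of_mem_erase hj) _ _
  rw [← insert_erase hk, Nat.multinomial_insert hk', Nat.multinomial_insert hk',
    sum_insert hk', sum_congr rfl hrest, Nat.multinomial_congr hrest, Function.update_self]
  have := Nat.add_one_mul_choose_eq (b k + ∑ j ∈ s.erase k, b j) (b k)
  grind

theorem Nat.sum_mul_multinomial_update_sub_one {ι : Type*} [Fintype ι] [DecidableEq ι]
    (a : ι → ℕ) {k : ι} (hk : 1 ≤ a k) :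
    (∑ j, a j) * Nat.multinomial univ (Function.update a k (a k - 1)) =
      a k * Nat.multinomial univ a := by
  have h := Nat.succ_mul_multinomial_update (mem_univ k) (Function.update a k (a k - 1))
  rw [Function.update_self, Nat.sub_add_cancel hk, Function.update_idem,
    Function.update_eq_self, sum_update_of_mem (mem_univ k)] at h
  rw [h, sum_eq_add_sum_sdiff_singleton_of_mem (mem_univ k)]
  congr 1
  omega

def hiFactor {K : Type*} [Field K] (x y s : K) : K :=
  x * y * (1 + s) / ((1 + (s - x)) * (2 + (s - x)) * (1 + (s - x) - y))

theorem hiFactor_recurrence {K : Type*} [Field K] [LinearOrder K] [IsStrictOrderedRing K]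
    {x y s : K} (hy : 0 ≤ y) (hxy : 1 ≤ s - x - y) :
    s * hiFactor x y s = x * hiFactor (x - 1) y (s - 1) + y * hiFactor x (y - 1) (s - 1) +
      (s - x - y) * hiFactor x y (s - 1) := by
  have h1 : 1 + (s - x) ≠ 0 := by linarith
  have h2 : 2 + (s - x) ≠ 0 := by linarith
  have h3 : 1 + (s - x) - y ≠ 0 := by linarith
  have h4 : s - x ≠ 0 := by linarith
  have h5 : s - x - y ≠ 0 := by linarith
  unfold hiFactor
  rw [show s - 1 - (x - 1) = s - x by ring, show 1 + (s - 1 - x) = s - x by ring,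
    show 2 + (s - 1 - x) = 1 + (s - x) by ring, show s - x - (y - 1) = 1 + (s - x) - y by ring]
  field_simp
  ring

def hiCoeff {ι K : Type*} [Fintype ι] [Field K] (z i : ι) (x : ι → K) : K :=
  hiFactor (x z) (x i) (∑ j, x j)

theorem hiCoeff_sub_single {ι K : Type*} [Fintype ι] [DecidableEq ι] [Field K]
    (z i k : ι) (x : ι → K) :
    hiCoeff z i (x - Pi.single k 1) =
      hiFactor (x z - if z = k then 1 else 0) (x i - if i = k then 1 else 0) (∑ j, x j - 1) := by
  simp [hiCoeff, Pi.single_apply, sum_sub_distrib]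

theorem sum_mul_hiCoeff_sub_single {ι K : Type*} [Fintype ι] [DecidableEq ι] [Field K]
    [LinearOrder K] [IsStrictOrderedRing K] {z i : ι} (hzi : z ≠ i) (x : ι → K)
    (hi : 0 ≤ x i) (hrest : 1 ≤ ∑ j ∈ {z, i}ᶜ, x j) :
    ∑ k, x k * hiCoeff z i (x - Pi.single k 1) = (∑ j, x j) * hiCoeff z i x := by
  have hsum : ∑ j, x j = x z + x i + ∑ j ∈ {z, i}ᶜ, x j := by
    rw [← sum_add_sum_compl {z, i} x, sum_pair hzi]
  have hcompl : ∀ k ∈ ({z, i} : Finset ι)ᶜ,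
      x k * hiCoeff z i (x - Pi.single k 1) = x k * hiFactor (x z) (x i) (∑ j, x j - 1) := by
    intro k hk
    simp only [mem_compl, mem_insert, mem_singleton, not_or] at hk
    simp [hiCoeff_sub_single, Ne.symm hk.1, Ne.symm hk.2]
  rw [← sum_add_sum_compl {z, i}, sum_pair hzi, sum_congr rfl hcompl, ← sum_mul,
    hiCoeff_sub_single, hiCoeff_sub_single, hiCoeff, hiFactor_recurrence hi (by linarith)]
  simp only [↓reduceIte, if_neg hzi, if_neg (Ne.symm hzi), sub_zero]
  rw [hsum]; ring

theorem cast_update_sub_one {ι K : Type*} [DecidableEq ι] [Ring K] (a : ι → ℕ) {k : ι}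
    (hk : 1 ≤ a k) :
    (fun j => (Function.update a k (a k - 1) j : K)) = (fun j => (a j : K)) - Pi.single k 1 := by
  ext j
  rcases eq_or_ne j k with rfl | hjk
  · simp [Nat.cast_sub hk]
  · simp [hjk]

theorem Hi_recurrence {n : ℕ} (hn : 3 ≤ n) (i : Fin n) (hi : 2 ≤ (i : ℕ))
    (H : (Fin n → ℕ) → ℚ)
    (hH : ∀ b : Fin n → ℕ,
      H b = (b ⟨0, by omega⟩ : ℚ) * (b i : ℚ) * (1 + ∑ j, (b j : ℚ)) /
          ((1 + ((∑ j, (b j : ℚ)) - b ⟨0, by omega⟩)) *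
            (2 + ((∑ j, (b j : ℚ)) - b ⟨0, by omega⟩)) *
            (1 + ((∑ j, (b j : ℚ)) - b ⟨0, by omega⟩) - b i)) *
        Nat.multinomial Finset.univ b)
    (a : Fin n → ℕ) (ha : ∀ j, 1 ≤ a j) :
    H a = ∑ k : Fin n, H (Function.update a k (a k - 1)) := by
  set z : Fin n := ⟨0, by omega⟩
  set x : Fin n → ℚ := fun j => (a j : ℚ)
  have hx : ∀ j, 1 ≤ x j := fun j => Nat.one_le_cast.mpr (ha j)
  have hzi : z ≠ i := by simp [z, Fin.ext_iff]; omega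
  have hrest : 1 ≤ ∑ j ∈ {z, i}ᶜ, x j := by
    have hmem : (⟨1, by omega⟩ : Fin n) ∈ ({z, i} : Finset (Fin n))ᶜ := by
      simp [z, Fin.ext_iff]; omega
    exact (hx _).trans (single_le_sum (fun j _ => (zero_le_one.trans (hx j))) hmem)
  have hS : (∑ j, x j) ≠ 0 := (sum_pos (fun j _ => zero_lt_one.trans_le (hx j)) ⟨z, mem_univ z⟩).ne'
  have hmult : ∀ k, (Nat.multinomial univ (Function.update a k (a k - 1)) : ℚ) =
      x k * (Nat.multinomial univ a / ∑ j, x j) := by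
    intro k
    rw [mul_div_assoc', eq_div_iff hS, mul_comm]
    simp only [x]
    exact_mod_cast Nat.sum_mul_multinomial_update_sub_one a (ha k)
  calc H a = hiCoeff z i x * Nat.multinomial univ a := hH a
    _ = (∑ k, x k * hiCoeff z i (x - Pi.single k 1)) * (Nat.multinomial univ a / ∑ j, x j) := by
      rw [sum_mul_hiCoeff_sub_single hzi x (zero_le_one.trans (hx i)) hrest]
      field_simp
    _ = ∑ k, H (Function.update a k (a k - 1)) := by
      rw [sum_mul]
      refine sum_congr rfl fun k _ => ?_
      rw [hH, hmult, ← cast_update_sub_one a (ha k)]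
      simp only [hiCoeff, hiFactor]
      ring
end

section
/- If a_r = 0 and r, s, t are distinct, then the constant term of (x_s x_t/x_r^2)·D_n(x,a) is 0. -/
open Finset

/-! Since `a r = 0`, no factor of the Dyson product contains a positive power of `x_r`, so every
monomial of `dyson a` has nonpositive exponent at `r`. The constant term of
`x_s x_t / x_r² · dyson a` is the coefficient in `dyson a` of `x_r² / (x_s x_t)`, whose exponent at `r` is `2`. -/

namespace AddMonoidAlgebra

variable {k G : Type*} [AddMonoid G]

theorem mul_mem_supported [Semiring k] {M : AddSubmonoid G} {f g : AddMonoidAlgebra k G}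
    (hf : f ∈ supported k k (M : Set G)) (hg : g ∈ supported k k (M : Set G)) :
    f * g ∈ supported k k (M : Set G) := by
  classical
  intro v hv
  obtain ⟨v₁, hv₁, v₂, hv₂, rfl⟩ := Finset.mem_add.mp (support_coeff_mul_subset f g hv)
  exact M.add_mem (hf hv₁) (hg hv₂)

theorem one_mem_supported [Semiring k] (M : AddSubmonoid G) :
    (1 : AddMonoidAlgebra k G) ∈ supported k k (M : Set G) :=
  mem_supported.mpr <| (Finset.coe_subset.mpr (support_coeff_one_subset)).trans <| by
    simp [M.zero_mem]

noncomputable def supportedSubalgebra (k : Type*) [CommSemiring k] (M : AddSubmonoid G) :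
    Subalgebra k (AddMonoidAlgebra k G) :=
  (supported k k (M : Set G)).toSubalgebra (one_mem_supported M)
    (fun _ _ => mul_mem_supported)

theorem mem_supportedSubalgebra_iff [CommSemiring k] {M : AddSubmonoid G}
    {f : AddMonoidAlgebra k G} : f ∈ supportedSubalgebra k M ↔ ∀ v ∉ M, f.coeff v = 0 :=
  mem_supported'

theorem single_mem_supportedSubalgebra [CommSemiring k] {M : AddSubmonoid G} {v : G}
    (hv : v ∈ M) (c : k) : single v c ∈ supportedSubalgebra k M :=
  mem_supportedSubalgebra_iff.mpr fun _ hw => Finsupp.single_eq_of_ne (by rintro rfl; exact hw hv)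

end AddMonoidAlgebra

open AddMonoidAlgebra

def nonposAt {ι : Type*} (r : ι) : AddSubmonoid (ι → ℤ) where
  carrier := {v | v r ≤ 0}
  add_mem' hv hw := by simpa using add_nonpos (α := ℤ) hv hw
  zero_mem' := le_refl (0 : ℤ)

@[simp]
theorem mem_nonposAt {ι : Type*} {r : ι} {v : ι → ℤ} : v ∈ nonposAt r ↔ v r ≤ 0 := by
  simp [nonposAt]

theorem dyson_mem_supportedSubalgebra_nonposAt {n : ℕ} (a : Fin n → ℕ) {r : Fin n}
    (har : a r = 0) : dyson a ∈ supportedSubalgebra ℚ (nonposAt r) := by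
  refine Subalgebra.prod_mem _ fun i _ => Subalgebra.prod_mem _ fun j _ => ?_
  rcases eq_or_ne i r with rfl | hir
  · simp [har]
  refine Subalgebra.pow_mem _ (Subalgebra.sub_mem _ (Subalgebra.one_mem _)
    (single_mem_supportedSubalgebra ?_ 1)) _
  rcases eq_or_ne j r with rfl | hjr
  · simp [Pi.single_eq_of_ne' hir]
  · simp [Pi.single_eq_of_ne' hir, Pi.single_eq_of_ne' hjr]

theorem ct_Xm_mul {n : ℕ} (w : Fin n → ℤ) (f : AddMonoidAlgebra ℚ (Fin n → ℤ)) :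
    ct (Xm w * f) = f.coeff (-w) := by
  rw [ct, Xm, coeff_single_mul_apply, one_mul, add_zero]

theorem ct_zero_of_ar_eq_zero'_general {n : ℕ} (a : Fin n → ℕ) (r s t : Fin n)
    (hrs : r ≠ s) (hrt : r ≠ t) (har : a r = 0) :
    ct (Xm (Pi.single s 1 + Pi.single t 1 - 2 • Pi.single r 1) * dyson a) = 0 := by
  rw [ct_Xm_mul]
  refine mem_supportedSubalgebra_iff.mp (dyson_mem_supportedSubalgebra_nonposAt a har) _ ?_
  simp [Pi.single_eq_of_ne hrs, Pi.single_eq_of_ne hrt]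

theorem ct_zero_of_ar_eq_zero' {n : ℕ} (a : Fin n → ℕ) (r s t : Fin n)
    (hrs : r ≠ s) (hrt : r ≠ t) (hst : s ≠ t) (har : a r = 0) :
    ct (Xm (Pi.single s 1 + Pi.single t 1 - 2 • Pi.single r 1) * dyson a) = 0 :=
  ct_zero_of_ar_eq_zero'_general a r s t hrs hrt har
end

section
/- If a_k = 0 and k ∉ {r,s}, then CT_x (x_s^2/x_r^2) D_n(x,a) = CT_{x^{⟨k⟩}} (x_s^2/x_r^2) D_{n-1}(x^{⟨k⟩}, a^{⟨k⟩}), i.e., the variable x_k and entry a_k can be deleted. -/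
open Finset

/-!
Since `a_k = 0`, the variable `x_k` enters `D_n(x, a)` only through the factors
`(1 - x_i/x_k)^{a_i}`, so `D_n(x, a) = F · D_{n-1}(x^{⟨k⟩}, a^{⟨k⟩})` with `F - 1` a sum of
monomials of negative degree in `x_k`. Neither `x_s^2/x_r^2` nor `D_{n-1}` involves `x_k`, so the
part coming from `F - 1` has no monomial of `x_k`-degree `0` and does not contribute to the
constant term.
-/

namespace AddMonoidAlgebra

theorem single_mem_supported {R M : Type*} [Semiring R] {s : Set M} {m : M} (hm : m ∈ s) (r : R) :
    single m r ∈ supported R R s :=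
  mem_supported.2 fun a ha => by
    rw [Finset.mem_coe, coeff_single, Finsupp.mem_support_single] at ha
    exact ha.1 ▸ hm

section Semiring

variable {R M : Type*} [Semiring R] [AddMonoid M]

theorem coeff_mul_eq_zero_of_forall_add_ne {x y : R[M]} {m : M}
    (h : ∀ a ∈ x.coeff.support, ∀ b ∈ y.coeff.support, a + b ≠ m) : (x * y).coeff m = 0 := by
  classical
  rw [coeff_mul]
  exact sum_eq_zero fun a ha => sum_eq_zero fun b hb => if_neg (h a ha b hb)

theorem mul_mem_supported_s10 {s : AddSubsemigroup M} {x y : R[M]}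
    (hx : x ∈ supported R R s) (hy : y ∈ supported R R s) : x * y ∈ supported R R s := by
  classical
  intro m hm
  obtain ⟨a, ha, b, hb, rfl⟩ := Finset.mem_add.1 (support_coeff_mul_subset x y hm)
  exact s.add_mem (hx ha) (hy hb)

end Semiring

section Ring

variable {R M : Type*} [Ring R] [AddMonoid M]

def oneAddSupported (s : AddSubsemigroup M) : Submonoid R[M] where
  carrier := {x | x - 1 ∈ supported R R s}
  one_mem' := by simp
  mul_mem' {x y} hx hy := by
    have h : x * y - 1 = (x - 1) * (y - 1) + (x - 1) + (y - 1) := by noncomm_ring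
    change x * y - 1 ∈ supported R R s
    rw [h]
    exact add_mem (add_mem (mul_mem_supported_s10 hx hy) hx) hy

theorem mem_oneAddSupported {s : AddSubsemigroup M} {x : R[M]} :
    x ∈ oneAddSupported s ↔ x - 1 ∈ supported R R s := Iff.rfl

theorem one_sub_single_mem_oneAddSupported {s : AddSubsemigroup M} {m : M} (hm : m ∈ s) (r : R) :
    1 - single m r ∈ oneAddSupported s := by
  rw [mem_oneAddSupported, sub_sub_cancel_left]
  exact neg_mem (single_mem_supported hm r)

end Ring

end AddMonoidAlgebra

namespace Fin

variable {n : ℕ} {M : Type*} [AddZeroClass M]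

def insertNthZeroHom (k : Fin (n + 1)) : (Fin n → M) →+ (Fin (n + 1) → M) where
  toFun := k.insertNth (α := fun _ => M) 0
  map_zero' := by simp
  map_add' v w := by rw [← insertNth_add, add_zero]

theorem insertNthZeroHom_apply_self (k : Fin (n + 1)) (v : Fin n → M) :
    insertNthZeroHom k v k = 0 :=
  insertNth_apply_same (α := fun _ => M) k 0 v

theorem insertNthZeroHom_injective (k : Fin (n + 1)) :
    Function.Injective (insertNthZeroHom (M := M) k) :=
  insertNth_right_injective (α := fun _ => M) 0

theorem insertNthZeroHom_single [DecidableEq (Fin n)] (k : Fin (n + 1)) (j : Fin n) (c : M) :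
    insertNthZeroHom k (Pi.single j c) = Pi.single (k.succAbove j) c := by
  funext i
  refine succAboveCases k ?_ (fun m => ?_) i
  · simp [insertNthZeroHom, ne_succAbove k j]
  · simp [insertNthZeroHom, Pi.single_apply]

theorem prod_filter_ne_succAbove {β : Type*} [CommMonoid β] (k : Fin (n + 1))
    (i : Fin n) (f : Fin (n + 1) → β) :
    ∏ j ∈ univ.filter (· ≠ k.succAbove i), f j =
      f k * ∏ j ∈ univ.filter (· ≠ i), f (k.succAbove j) := by
  simp only [prod_filter, prod_univ_succAbove _ k, if_pos (ne_succAbove k i),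
    ne_eq, succAbove_right_inj]

end Fin

namespace MvLaurent

open AddMonoidAlgebra

variable {R : Type*} [CommRing R] {n : ℕ}

/-- The inclusion `R[(x^{⟨k⟩})^{±1}] → R[x^{±1}]`. -/
noncomputable def embed (k : Fin (n + 1)) : R[Fin n → ℤ] →+* R[Fin (n + 1) → ℤ] :=
  mapDomainRingHom R (Fin.insertNthZeroHom k)

theorem embed_single (k : Fin (n + 1)) (v : Fin n → ℤ) (r : R) :
    embed k (single v r) = single (Fin.insertNthZeroHom k v) r :=
  mapDomain_single

theorem coeff_embed_zero (k : Fin (n + 1)) (f : R[Fin n → ℤ]) :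
    (embed k f).coeff 0 = f.coeff 0 := by
  rw [← map_zero (Fin.insertNthZeroHom k)]
  exact Finsupp.mapDomain_apply (Fin.insertNthZeroHom_injective k) f.coeff 0

theorem embed_mem_supported (k : Fin (n + 1)) (f : R[Fin n → ℤ]) :
    embed k f ∈ supported R R {v | v k = 0} := by
  classical
  intro v hv
  obtain ⟨u, -, rfl⟩ := Finset.mem_image.1 (Finsupp.mapDomain_support hv)
  exact Fin.insertNthZeroHom_apply_self k u

def negExponent (k : Fin (n + 1)) : AddSubsemigroup (Fin (n + 1) → ℤ) where
  carrier := {v | v k < 0}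
  add_mem' {a b} (ha : a k < 0) (hb : b k < 0) := add_neg ha hb

theorem coeff_zero_embed_mul {k : Fin (n + 1)} (g : R[Fin n → ℤ]) {F : R[Fin (n + 1) → ℤ]}
    (hF : F ∈ oneAddSupported (negExponent k)) : (embed k g * F).coeff 0 = g.coeff 0 := by
  have hvanish : (embed k g * (F - 1)).coeff 0 = 0 :=
    coeff_mul_eq_zero_of_forall_add_ne fun a ha b hb hab => by
      have h0 : a k = 0 := embed_mem_supported k g ha
      have hneg : b k < 0 := (mem_oneAddSupported.1 hF) hb
      have := congrFun hab k
      simp only [Pi.add_apply, Pi.zero_apply] at this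
      omega
  calc (embed k g * F).coeff 0 = (embed k g + embed k g * (F - 1)).coeff 0 := by
        rw [mul_sub, mul_one, add_sub_cancel]
    _ = g.coeff 0 := by rw [coeff_add, Finsupp.add_apply, hvanish, add_zero, coeff_embed_zero]

theorem embed_Xm (k : Fin (n + 1)) (v : Fin n → ℤ) :
    embed k (Xm v) = Xm (Fin.insertNthZeroHom k v) :=
  embed_single k v 1

theorem dyson_eq_mul_embed {a : Fin (n + 1) → ℕ} {k : Fin (n + 1)} (hak : a k = 0) :
    dyson a = (∏ i : Fin n, (1 - Xm (Pi.single (k.succAbove i) 1 - Pi.single k 1)) ^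
      a (k.succAbove i)) * embed k (dyson (a ∘ k.succAbove)) := by
  rw [dyson, Fin.prod_univ_succAbove _ k, hak]
  simp only [pow_zero, prod_const_one, one_mul]
  rw [dyson, map_prod, ← prod_mul_distrib]
  refine prod_congr rfl fun i _ => ?_
  rw [Fin.prod_filter_ne_succAbove k i, map_prod]
  congr 1
  refine prod_congr rfl fun j _ => ?_
  rw [map_pow, map_sub, map_one, embed_Xm, map_sub, Fin.insertNthZeroHom_single,
    Fin.insertNthZeroHom_single, Function.comp_apply]

theorem prod_one_sub_Xm_mem_oneAddSupported (a : Fin (n + 1) → ℕ) (k : Fin (n + 1)) :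
    (∏ i : Fin n, (1 - Xm (Pi.single (k.succAbove i) 1 - Pi.single k 1)) ^ a (k.succAbove i))
      ∈ oneAddSupported (negExponent k) :=
  prod_mem fun i _ => pow_mem (one_sub_single_mem_oneAddSupported
    (by simp [negExponent, Fin.ne_succAbove k i]) 1) _

theorem ct_embed_mul_dyson {a : Fin (n + 1) → ℕ} {k : Fin (n + 1)} (hak : a k = 0)
    (g : ℚ[Fin n → ℤ]) : ct (embed k g * dyson a) = ct (g * dyson (a ∘ k.succAbove)) := by
  rw [dyson_eq_mul_embed hak, mul_left_comm, ← map_mul, mul_comm]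
  exact coeff_zero_embed_mul _ (prod_one_sub_Xm_mem_oneAddSupported a k)

end MvLaurent

open MvLaurent in
theorem ct_delete_zero_entry_general {n : ℕ} (a : Fin (n + 1) → ℕ) (k : Fin (n + 1))
    (r' s' : Fin n) (hak : a k = 0) :
    ct (Xm (2 • Pi.single (k.succAbove s') 1 - 2 • Pi.single (k.succAbove r') 1) * dyson a) =
      ct (Xm (2 • Pi.single s' 1 - 2 • Pi.single r' 1) * dyson (a ∘ k.succAbove)) := by
  have hmonomial : Xm (2 • Pi.single (k.succAbove s') 1 - 2 • Pi.single (k.succAbove r') 1) =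
      embed k (Xm (2 • Pi.single s' 1 - 2 • Pi.single r' 1)) := by
    rw [embed_Xm, map_sub, map_nsmul, map_nsmul, Fin.insertNthZeroHom_single,
      Fin.insertNthZeroHom_single]
  rw [hmonomial]
  exact ct_embed_mul_dyson hak _

/-- If `a k = 0` and `k ∉ {r, s}`, the variable `x_k` and entry `a_k` can be deleted:
here `r' s' : Fin n` are the indices corresponding to `r = k.succAbove r'`,
`s = k.succAbove s'` in the smaller index set. -/
theorem ct_delete_zero_entry {n : ℕ} (a : Fin (n + 1) → ℕ) (k : Fin (n + 1))
    (r' s' : Fin n) (hrs : r' ≠ s') (hak : a k = 0) :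
    ct (Xm (2 • Pi.single (k.succAbove s') 1 - 2 • Pi.single (k.succAbove r') 1) * dyson a) =
      ct (Xm (2 • Pi.single s' 1 - 2 • Pi.single r' 1) * dyson (a ∘ k.succAbove)) :=
  ct_delete_zero_entry_general a k r' s' hak
end

section
/- The constant term in x_k of (x_2^2/x_1^2) ∏_{i≠k, 1≤i≤n} (1 - x_i/x_k)^{a_i}, with k = 2 (and n ≥ 2), equals C(a_1,2) + a_1 ∑_{i=3}^n a_i x_i/x_1 + ∑_{i=3}^n C(a_i,2) x_i^2/x_1^2 + ∑_{3≤i<j≤n} a_i a_j x_i x_j / x_1^2, where C(m,2) = m(m-1)/2. -/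
open Finset

open Polynomial

/-!
Record the exponent of `x₂` in an auxiliary variable `T` standing for `x₂⁻¹`. Each factor
`1 - xᵢ/x₂` becomes `1 - (xᵢ/x₂) T`, so the product becomes a genuine polynomial `Q` in `T`,
and the `x₂`-free part of `(x₂/x₁)² Q` is `(x₂/x₁)²` times the `T²`-coefficient of `Q`.
Substituting `T ↦ (x₂/x₁) T` absorbs the prefactor and turns `Q` into
`(1 - T)^{a₁} ∏_{i ≥ 3} (1 - (xᵢ/x₁) T)^{aᵢ}`, whose `T²`-coefficient is read off from the
linear and quadratic coefficients of its factors.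
-/

namespace Polynomial

variable {R : Type*} [CommRing R]

theorem mul_coeff_two (p q : R[X]) :
    (p * q).coeff 2 = p.coeff 0 * q.coeff 2 + p.coeff 1 * q.coeff 1 + p.coeff 2 * q.coeff 0 := by
  simp [coeff_mul, Nat.sum_antidiagonal_succ, add_assoc]

theorem coeff_one_sub_C_mul_X_pow (c : R) (m k : ℕ) :
    ((1 - C c * X) ^ m).coeff k = m.choose k * (-c) ^ k := by
  have h : (1 - C c * X) ^ m = ((1 + X) ^ m).comp (C (-c) * X) := by
    simp [sub_eq_add_neg]
  rw [h, comp_C_mul_X_coeff, coeff_one_add_X_pow]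

theorem coeff_toLaurent_natCast {S : Type*} [Semiring S] (p : S[X]) (m : ℕ) :
    (toLaurent p).coeff (m : ℤ) = p.coeff m :=
  Finsupp.mapDomain_apply Nat.cast_injective _ _

variable {ι : Type*} (s : Finset ι) (a : ι → ℕ) (c : ι → R)

theorem coeff_one_prod {f : ι → R[X]} (hf : ∀ i ∈ s, (f i).coeff 0 = 1) :
    (∏ i ∈ s, f i).coeff 1 = ∑ i ∈ s, (f i).coeff 1 := by
  classical
  induction s using Finset.induction_on with
  | empty => simp [coeff_one]
  | insert m s hm ih =>
    have hs : ∀ i ∈ s, (f i).coeff 0 = 1 := fun i hi => hf i (mem_insert_of_mem hi)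
    rw [prod_insert hm, sum_insert hm, mul_coeff_one, coeff_zero_prod, prod_eq_one hs, ih hs,
      hf m (mem_insert_self m s)]
    ring

theorem coeff_two_prod [LinearOrder ι] {f : ι → R[X]} (hf : ∀ i ∈ s, (f i).coeff 0 = 1) :
    (∏ i ∈ s, f i).coeff 2 = ∑ i ∈ s, (f i).coeff 2 +
      ∑ i ∈ s, ∑ j ∈ s with i < j, (f i).coeff 1 * (f j).coeff 1 := by
  classical
  induction s using Finset.induction_on_max with
  | empty => simp [coeff_one]
  | insert m s hlt ih =>
    have hm : m ∉ s := fun h => lt_irrefl m (hlt m h)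
    have hs : ∀ i ∈ s, (f i).coeff 0 = 1 := fun i hi => hf i (mem_insert_of_mem hi)
    have hpairs :
        ∑ i ∈ insert m s, ∑ j ∈ insert m s with i < j, (f i).coeff 1 * (f j).coeff 1 =
        ∑ i ∈ s, ∑ j ∈ s with i < j, (f i).coeff 1 * (f j).coeff 1 +
          ∑ i ∈ s, (f i).coeff 1 * (f m).coeff 1 := by
      rw [sum_insert hm, filter_insert, if_neg (lt_irrefl m),
        filter_false_of_mem fun i hi => not_lt_of_gt (hlt i hi), sum_empty, zero_add,
        ← sum_add_distrib]
      refine sum_congr rfl fun i hi => ?_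
      rw [filter_insert, if_pos (hlt i hi), sum_insert fun h => hm (mem_of_mem_filter m h),
        add_comm]
    rw [prod_insert hm, mul_comm, mul_coeff_two, coeff_zero_prod, prod_eq_one hs, ih hs,
      coeff_one_prod s hs, hf m (mem_insert_self m s), hpairs, sum_insert hm, sum_mul]
    ring

theorem coeff_zero_prod_one_sub_C_mul_X_pow :
    (∏ i ∈ s, (1 - C (c i) * X) ^ a i).coeff 0 = 1 := by
  simp [coeff_zero_prod, coeff_one_sub_C_mul_X_pow]

theorem coeff_one_prod_one_sub_C_mul_X_pow :
    (∏ i ∈ s, (1 - C (c i) * X) ^ a i).coeff 1 = -∑ i ∈ s, a i • c i := by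
  rw [coeff_one_prod s fun i _ => by simp [coeff_one_sub_C_mul_X_pow], ← sum_neg_distrib]
  simp [coeff_one_sub_C_mul_X_pow, nsmul_eq_mul]

theorem coeff_two_prod_one_sub_C_mul_X_pow [LinearOrder ι] :
    (∏ i ∈ s, (1 - C (c i) * X) ^ a i).coeff 2 = ∑ i ∈ s, (a i).choose 2 • c i ^ 2 +
      ∑ i ∈ s, ∑ j ∈ s with i < j, (a i * a j) • (c i * c j) := by
  rw [coeff_two_prod s fun i _ => by simp [coeff_one_sub_C_mul_X_pow]]
  simp only [coeff_one_sub_C_mul_X_pow, Nat.choose_one_right, neg_sq, pow_one, nsmul_eq_mul,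
    Nat.cast_mul]
  congr 1
  exact sum_congr rfl fun i _ => sum_congr rfl fun j _ => by ring

theorem coeff_two_one_sub_X_pow_mul_prod [LinearOrder ι] (m : ℕ) :
    ((1 - X) ^ m * ∏ i ∈ s, (1 - C (c i) * X) ^ a i).coeff 2 =
      m.choose 2 • 1 + m • ∑ i ∈ s, a i • c i + ∑ i ∈ s, (a i).choose 2 • c i ^ 2 +
        ∑ i ∈ s, ∑ j ∈ s with i < j, (a i * a j) • (c i * c j) := by
  have h := coeff_one_sub_C_mul_X_pow (1 : R) m
  rw [C_1, one_mul] at h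
  rw [mul_coeff_two, coeff_zero_prod_one_sub_C_mul_X_pow, coeff_one_prod_one_sub_C_mul_X_pow,
    coeff_two_prod_one_sub_C_mul_X_pow, h, h, h]
  simp only [Nat.choose_zero_right, Nat.choose_one_right, pow_zero, pow_one, even_two,
    Even.neg_pow, one_pow, nsmul_eq_mul, Nat.cast_one, mul_one, one_mul, mul_neg, neg_mul,
    neg_neg]
  abel

theorem coeff_prod_one_sub_C_mul_X_pow_mul_pow (r : R) (m : ℕ) :
    (∏ i ∈ s, (1 - C (c i) * X) ^ a i).coeff m * r ^ m =
      (∏ i ∈ s, (1 - C (c i * r) * X) ^ a i).coeff m := by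
  rw [← comp_C_mul_X_coeff, prod_comp]
  simp only [pow_comp, sub_comp, one_comp, mul_comp, C_comp, X_comp, ← mul_assoc, ← C_mul]

end Polynomial

namespace AddMonoidAlgebra

variable {R M : Type*} [CommSemiring R] [AddCommMonoid M]

noncomputable def laurentGrading (ℓ : M →+ ℤ) : R[M] →ₐ[R] LaurentPolynomial R[M] :=
  lift R (LaurentPolynomial R[M]) M
    ((of R[M] ℤ).comp ℓ.toMultiplicative *
      (algebraMap R[M] (LaurentPolynomial R[M])).toMonoidHom.comp (of R M))

theorem laurentGrading_single (ℓ : M →+ ℤ) (v : M) (r : R) :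
    laurentGrading ℓ (single v r) = single (ℓ v) (single v r) := by
  rw [laurentGrading, lift_single, MonoidHom.mul_apply, mul_comm]
  change r • (single 0 (single v 1) * single (ℓ v) 1) = _
  rw [single_mul_single, zero_add, mul_one, smul_single, smul_single', mul_one]

theorem coeff_laurentGrading (ℓ : M →+ ℤ) (f : R[M]) (m : ℤ) :
    (laurentGrading ℓ f).coeff m = ofCoeff (f.coeff.filter fun v => ℓ v = m) := by
  classical
  induction f using induction_linear with
  | zero => simp [Finsupp.filter_zero]
  | add f g hf hg =>
    simp only [map_add, coeff_add, Finsupp.add_apply, hf, hg, Finsupp.filter_add]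
    rfl
  | single v r =>
    rw [laurentGrading_single, coeff_single, coeff_single, Finsupp.single_apply]
    by_cases h : ℓ v = m
    · rw [if_pos h, Finsupp.filter_single_of_pos (p := fun v => ℓ v = m) h]; rfl
    · rw [if_neg h, Finsupp.filter_single_of_neg (p := fun v => ℓ v = m) h]; rfl

end AddMonoidAlgebra

section ConstantTerm

open AddMonoidAlgebra

variable {n : ℕ}

theorem Xm_add (u v : Fin n → ℤ) : Xm (u + v) = Xm u * Xm v := by
  simp [Xm, single_mul_single]

theorem Xm_zero : Xm (0 : Fin n → ℤ) = 1 := rfl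

theorem laurentGrading_Xm (ℓ : (Fin n → ℤ) →+ ℤ) (v : Fin n → ℤ) :
    laurentGrading ℓ (Xm v) = single (ℓ v) (Xm v) :=
  laurentGrading_single ℓ v 1

/-- The paper's `CT_{x_k}`. -/
noncomputable def constTermIn (k : Fin n) (f : AddMonoidAlgebra ℚ (Fin n → ℤ)) :
    AddMonoidAlgebra ℚ (Fin n → ℤ) :=
  ofCoeff (f.coeff.filter fun v => v k = 0)

theorem constTermIn_Xm_mul_prod (k : Fin n) {s : Finset (Fin n)} (hk : k ∉ s) (a : Fin n → ℕ)
    {w : Fin n → ℤ} {m : ℕ} (hw : w k = m) :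
    constTermIn k (Xm w * ∏ i ∈ s, (1 - Xm (Pi.single i 1 - Pi.single k 1)) ^ a i) =
      Xm w * (∏ i ∈ s, (1 - C (Xm (Pi.single i 1 - Pi.single k 1)) * X) ^ a i).coeff m := by
  -- minus the `x_k`-degree, so that every `xᵢ/x_k` carries `T¹`
  set ℓ : (Fin n → ℤ) →+ ℤ := -Pi.evalAddMonoidHom (fun _ => ℤ) k
  have hct : ∀ f, constTermIn k f = (laurentGrading ℓ f).coeff 0 := by
    simp [constTermIn, coeff_laurentGrading, ℓ]
  have hfactor : ∀ i ∈ s, laurentGrading ℓ ((1 - Xm (Pi.single i 1 - Pi.single k 1)) ^ a i) =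
      toLaurent ((1 - C (Xm (Pi.single i 1 - Pi.single k 1)) * X) ^ a i) := by
    intro i hi
    have hik : i ≠ k := ne_of_mem_of_not_mem hi hk
    simp [laurentGrading_Xm, ℓ, hik, LaurentPolynomial.single_eq_C_mul_T]
  rw [hct, map_mul, map_prod, prod_congr rfl hfactor, ← map_prod, laurentGrading_Xm,
    coeff_single_mul_apply, show -ℓ w + 0 = (m : ℤ) by simp [ℓ, hw], coeff_toLaurent_natCast]

end ConstantTerm

/-- the constant term in `x₂` alone, i.e. the sum of all terms whose exponent of `x₂`
is zero, of `(x₂²/x₁²) ∏_{i ≠ 2} (1 - x_i/x₂)^{a_i}` -/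
theorem ct_x2_boundary {n : ℕ} (hn : 1 < n) (a : Fin n → ℕ) :
    AddMonoidAlgebra.ofCoeff (Finsupp.filter (fun v : Fin n → ℤ => v ⟨1, hn⟩ = 0)
      (Xm (2 • Pi.single (⟨1, hn⟩ : Fin n) 1 - 2 • Pi.single (⟨0, by omega⟩ : Fin n) 1) *
        ∏ i ∈ Finset.univ.filter (fun i => i ≠ (⟨1, hn⟩ : Fin n)),
          (1 - Xm (Pi.single i 1 - Pi.single (⟨1, hn⟩ : Fin n) 1)) ^ a i).coeff) =
    ((a ⟨0, by omega⟩ : ℚ) * ((a ⟨0, by omega⟩ : ℚ) - 1) / 2) •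
        (1 : AddMonoidAlgebra ℚ (Fin n → ℤ)) +
      (a ⟨0, by omega⟩ : ℚ) •
        ∑ i ∈ Finset.univ.filter (fun i : Fin n => 2 ≤ (i : ℕ)),
          (a i : ℚ) • Xm (Pi.single i 1 - Pi.single (⟨0, by omega⟩ : Fin n) 1) +
      (∑ i ∈ Finset.univ.filter (fun i : Fin n => 2 ≤ (i : ℕ)),
        ((a i : ℚ) * ((a i : ℚ) - 1) / 2) •
          Xm (2 • Pi.single i 1 - 2 • Pi.single (⟨0, by omega⟩ : Fin n) 1)) +
      ∑ i ∈ Finset.univ.filter (fun i : Fin n => 2 ≤ (i : ℕ)),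
        ∑ j ∈ Finset.univ.filter (fun j : Fin n => 2 ≤ (j : ℕ) ∧ i < j),
          ((a i : ℚ) * (a j : ℚ)) •
            Xm (Pi.single i 1 + Pi.single j 1 - 2 • Pi.single (⟨0, by omega⟩ : Fin n) 1) := by
  set k : Fin n := ⟨1, hn⟩
  set z : Fin n := ⟨0, by omega⟩
  set S := univ.filter fun i : Fin n => 2 ≤ (i : ℕ)
  have hzk : z ≠ k := by simp [z, k, Fin.ext_iff]
  have hS : univ.filter (· ≠ k) = insert z S := by
    ext j; simp [S, z, k, Fin.ext_iff]; omega
  have hzS : z ∉ S := by simp [S, z]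
  have hpairs :
      ∀ i, univ.filter (fun j : Fin n => 2 ≤ (j : ℕ) ∧ i < j) = S.filter (i < ·) :=
    fun i => (filter_filter _ _ _).symm
  have hrescale : ∀ i,
      Xm (Pi.single i 1 - Pi.single k 1) * Xm (Pi.single k 1 - Pi.single z 1) =
        Xm (Pi.single i 1 - Pi.single z 1) := fun i => by rw [← Xm_add]; congr 1; abel
  have hsq : ∀ i, Xm (2 • Pi.single i 1 - 2 • Pi.single z 1) =
      Xm (Pi.single i 1 - Pi.single z 1) ^ 2 := fun i => by rw [sq, ← Xm_add]; congr 1; abel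
  have hmul : ∀ i j, Xm (Pi.single i 1 + Pi.single j 1 - 2 • Pi.single z 1) =
      Xm (Pi.single i 1 - Pi.single z 1) * Xm (Pi.single j 1 - Pi.single z 1) :=
    fun i j => by rw [← Xm_add]; congr 1; abel
  change constTermIn k _ = _
  rw [constTermIn_Xm_mul_prod k (by simp) a (m := 2) (by simp [hzk.symm]), hsq, mul_comm,
    coeff_prod_one_sub_C_mul_X_pow_mul_pow]
  simp only [hrescale]
  rw [hS, prod_insert hzS, sub_self, Xm_zero, C_1, one_mul, coeff_two_one_sub_X_pow_mul_prod]
  simp only [hsq, hmul, hpairs, ← Nat.cast_choose_two, ← Nat.cast_mul, Nat.cast_smul_eq_nsmul]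
end

section
/- CT_{x^{⟨2⟩}} a_1 ∑_{i=3}^n a_i (x_i/x_1) D_{n-1}(x^{⟨2⟩}, a^{⟨2⟩}) = - a_1^2 (a^{(1)} - a_2)/(1 + a^{(1)} - a_2) · C_{n-1}(a^{⟨2⟩}). -/
open Finset

namespace DysonAux

variable {n : ℕ}

local notation "A" => AddMonoidAlgebra ℚ (Fin n → ℤ)

instance : IsDomain (AddMonoidAlgebra ℚ (Fin n → ℤ)) := NoZeroDivisors.to_isDomain _

/-- Dyson product over a subset of the variables. -/
noncomputable def DS (S : Finset (Fin n)) (a : Fin n → ℕ) : AddMonoidAlgebra ℚ (Fin n → ℤ) :=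
  ∏ i ∈ S, ∏ j ∈ S.erase i, (1 - Xm (Pi.single i 1 - Pi.single j 1)) ^ a i

lemma dyson_eq (a : Fin n → ℕ) : dyson a = DS univ a := by
  unfold dyson DS
  refine Finset.prod_congr rfl fun i _ => ?_
  rw [Finset.filter_ne']

lemma Xm_add (u v : Fin n → ℤ) : Xm (u + v) = Xm u * Xm v := by
  simp [Xm, AddMonoidAlgebra.single_mul_single]

lemma Xm_apply (u v : Fin n → ℤ) : (Xm u).coeff v = if u = v then 1 else 0 := by
  simp [Xm, AddMonoidAlgebra.coeff_single, Finsupp.single_apply]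

lemma Xm_ne_zero (u : Fin n → ℤ) : Xm u ≠ 0 := by
  simp only [Xm]
  intro h
  have := congrArg (fun f : A => f.coeff u) h
  simp [AddMonoidAlgebra.coeff_single] at this

lemma ct_one : ct (1 : A) = 1 := by
  simp [ct, AddMonoidAlgebra.one_def]

lemma ct_add (f g : A) : ct (f + g) = ct f + ct g := rfl

lemma ct_sub (f g : A) : ct (f - g) = ct f - ct g := rfl

lemma ct_smul (c : ℚ) (f : A) : ct (c • f) = c * ct f := rfl

lemma ct_sum {ι : Type*} (s : Finset ι) (f : ι → A) : ct (∑ i ∈ s, f i) = ∑ i ∈ s, ct (f i) := by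
  simp only [ct]
  rw [AddMonoidAlgebra.coeff_sum, Finsupp.finset_sum_apply]

lemma ct_mul_Xm (f : A) (u : Fin n → ℤ) : ct (f * Xm u) = f.coeff (-u) := by
  rw [ct, Xm, AddMonoidAlgebra.coeff_mul_single_apply]
  simp

lemma ct_Xm_mul (f : A) (u : Fin n → ℤ) : ct (Xm u * f) = f.coeff (-u) := by
  rw [ct, Xm, AddMonoidAlgebra.coeff_single_mul_apply]
  simp

lemma ct_eq_zero_of_support {f : A} (h : (0 : Fin n → ℤ) ∉ f.coeff.support) : ct f = 0 := by
  simpa [ct] using Finsupp.notMem_support_iff.mp h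

lemma mem_support_mul {f g : A} {v} (h : v ∈ (f * g).coeff.support) :
    ∃ u ∈ f.coeff.support, ∃ w ∈ g.coeff.support, u + w = v := by
  classical
  have := AddMonoidAlgebra.support_coeff_mul_subset f g h
  rwa [Finset.mem_add] at this

lemma supp_one {M : AddSubmonoid (Fin n → ℤ)} : ∀ v ∈ (1 : A).coeff.support, v ∈ M := by
  intro v hv
  rw [AddMonoidAlgebra.one_def] at hv
  have := Finsupp.support_single_subset hv
  simp only [Finset.mem_singleton] at this
  subst this; exact M.zero_mem

lemma supp_mul_mem {M : AddSubmonoid (Fin n → ℤ)} {f g : A}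
    (hf : ∀ v ∈ f.coeff.support, v ∈ M) (hg : ∀ v ∈ g.coeff.support, v ∈ M) :
    ∀ v ∈ (f * g).coeff.support, v ∈ M := by
  intro v hv
  obtain ⟨u, hu, w, hw, rfl⟩ := mem_support_mul hv
  exact M.add_mem (hf u hu) (hg w hw)

lemma supp_pow_mem {M : AddSubmonoid (Fin n → ℤ)} {f : A}
    (hf : ∀ v ∈ f.coeff.support, v ∈ M) (m : ℕ) :
    ∀ v ∈ (f ^ m).coeff.support, v ∈ M := by
  induction m with
  | zero => simpa using (supp_one (M := M))
  | succ m ih => rw [pow_succ]; exact supp_mul_mem ih hf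

lemma supp_prod_mem {M : AddSubmonoid (Fin n → ℤ)} {ι : Type*} {s : Finset ι} {f : ι → A}
    (hf : ∀ i ∈ s, ∀ v ∈ (f i).coeff.support, v ∈ M) :
    ∀ v ∈ (∏ i ∈ s, f i).coeff.support, v ∈ M := by
  classical
  induction s using Finset.induction_on with
  | empty => simpa using (supp_one (M := M))
  | @insert x s' hx ih =>
      rw [Finset.prod_insert hx]
      exact supp_mul_mem (hf x (mem_insert_self x s'))
        (ih fun i hi => hf i (mem_insert_of_mem hi))

lemma supp_one_sub_Xm {M : AddSubmonoid (Fin n → ℤ)} {u : Fin n → ℤ} (hu : u ∈ M) :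
    ∀ v ∈ ((1 : A) - Xm u).coeff.support, v ∈ M := by
  intro v hv
  have h1 : ((1 : A) - Xm u).coeff.support ⊆ (1 : A).coeff.support ∪ (Xm u).coeff.support := by
    rw [sub_eq_add_neg]
    refine (Finsupp.support_add).trans ?_
    rw [show AddMonoidAlgebra.coeffEquiv.toFun (-Xm u) = -(Xm u).coeff from rfl, Finsupp.support_neg,
      show AddMonoidAlgebra.coeffEquiv.toFun (1 : A) = (1 : A).coeff from rfl]
  rcases Finset.mem_union.mp (h1 hv) with h | h
  · exact supp_one v h
  · have := Finsupp.support_single_subset h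
    simp only [Finset.mem_singleton] at this
    subst this; exact hu

/-- Support of `DS S a` is contained in any submonoid containing the relevant generators. -/
lemma supp_DS {M : AddSubmonoid (Fin n → ℤ)} {S : Finset (Fin n)} {a : Fin n → ℕ}
    (h : ∀ i ∈ S, a i ≠ 0 → ∀ j ∈ S.erase i,
      (Pi.single i 1 - Pi.single j 1 : Fin n → ℤ) ∈ M) :
    ∀ v ∈ (DS S a).coeff.support, v ∈ M := by
  refine supp_prod_mem fun i hi => supp_prod_mem fun j hj => ?_
  rcases Nat.eq_zero_or_pos (a i) with h0 | h0
  · rw [h0, pow_zero]; exact supp_one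
  · exact supp_pow_mem (supp_one_sub_Xm (h i hi (Nat.pos_iff_ne_zero.mp h0) j hj)) _


/-- submonoid of exponent vectors with `v c ≤ 0` -/
def coordLE (c : Fin n) : AddSubmonoid (Fin n → ℤ) where
  carrier := {v | v c ≤ 0}
  add_mem' := by intro u v hu hv; simp only [Set.mem_setOf_eq, Pi.add_apply] at *; omega
  zero_mem' := by simp

/-- submonoid of exponent vectors with `v c = 0` -/
def coordEQ (c : Fin n) : AddSubmonoid (Fin n → ℤ) where
  carrier := {v | v c = 0}
  add_mem' := by intro u v hu hv; simp only [Set.mem_setOf_eq, Pi.add_apply] at *; omega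
  zero_mem' := by simp

lemma supp_smul_coord {c : Fin n} {q : ℚ} {f : A} {k : ℤ}
    (hf : ∀ v ∈ f.coeff.support, v c ≤ k) : ∀ v ∈ (q • f).coeff.support, v c ≤ k :=
  fun v hv => hf v (Finsupp.support_smul hv)

lemma supp_add_coord {c : Fin n} {f g : A} {k : ℤ}
    (hf : ∀ v ∈ f.coeff.support, v c ≤ k) (hg : ∀ v ∈ g.coeff.support, v c ≤ k) :
    ∀ v ∈ (f + g).coeff.support, v c ≤ k := by
  intro v hv
  rcases Finset.mem_union.mp (Finsupp.support_add hv) with h | h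
  · exact hf v h
  · exact hg v h

lemma supp_sub_coord {c : Fin n} {f g : A} {k : ℤ}
    (hf : ∀ v ∈ f.coeff.support, v c ≤ k) (hg : ∀ v ∈ g.coeff.support, v c ≤ k) :
    ∀ v ∈ (f - g).coeff.support, v c ≤ k := by
  rw [sub_eq_add_neg]
  refine supp_add_coord hf ?_
  intro v hv
  rw [AddMonoidAlgebra.coeff_neg, Finsupp.support_neg] at hv
  exact hg v hv

lemma supp_mul_coord {c : Fin n} {f g : A} {k l : ℤ}
    (hf : ∀ v ∈ f.coeff.support, v c ≤ k) (hg : ∀ v ∈ g.coeff.support, v c ≤ l) :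
    ∀ v ∈ (f * g).coeff.support, v c ≤ k + l := by
  intro v hv
  obtain ⟨u, hu, w, hw, rfl⟩ := mem_support_mul hv
  have := hf u hu; have := hg w hw
  simp only [Pi.add_apply]; omega

lemma supp_Xm {u : Fin n → ℤ} : ∀ v ∈ (Xm u).coeff.support, v = u := by
  intro v hv
  have := Finsupp.support_single_subset hv
  simpa using this

/-- decomposition of `(1 - Xm u) ^ m` to second order along coordinate `c`. -/
lemma pow_decomp {c : Fin n} {u : Fin n → ℤ} (hu : u c = -1) (m : ℕ) :
    ∃ R : A, (1 - Xm u) ^ m = 1 - (m : ℚ) • Xm u + R ∧ ∀ v ∈ R.coeff.support, v c ≤ -2 := by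
  induction m with
  | zero => exact ⟨0, by simp, by simp⟩
  | succ m ih =>
      obtain ⟨R, hR, hRs⟩ := ih
      refine ⟨(m : ℚ) • (Xm u * Xm u) + R - R * Xm u, ?_, ?_⟩
      · rw [pow_succ, hR]
        push_cast
        simp only [Algebra.smul_def, map_add, map_one, map_natCast]
        ring
      · have hXu : ∀ v ∈ (Xm u).coeff.support, v c ≤ -1 := fun v hv => by rw [supp_Xm v hv, hu]
        refine supp_sub_coord (supp_add_coord (supp_smul_coord ?_) hRs) ?_
        · intro v hv
          have := supp_mul_coord hXu hXu v hv; omega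
        · intro v hv
          have := supp_mul_coord hRs hXu v hv; omega

lemma supp_linpart {c : Fin n} {T : Finset (Fin n)} {U : Fin n → (Fin n → ℤ)} {m : Fin n → ℕ}
    (hU : ∀ j ∈ T, (U j) c = -1) :
    ∀ v ∈ (∑ j ∈ T, (m j : ℚ) • Xm (U j)).coeff.support, v c ≤ -1 := by
  classical
  induction T using Finset.induction_on with
  | empty => simp
  | @insert x s hx ih =>
      rw [Finset.sum_insert hx]
      exact supp_add_coord
        (supp_smul_coord (fun v hv => by rw [supp_Xm v hv, hU x (mem_insert_self x s)]))
        (ih fun j hj => hU j (mem_insert_of_mem hj))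

/-- decomposition of the product `∏ (1 - Xm (U j)) ^ m j` to second order along coordinate c -/
lemma prod_decomp {c : Fin n} {T : Finset (Fin n)} {U : Fin n → (Fin n → ℤ)} {m : Fin n → ℕ}
    (hU : ∀ j ∈ T, (U j) c = -1) :
    ∃ R : A, ∏ j ∈ T, (1 - Xm (U j)) ^ m j
        = 1 - (∑ j ∈ T, (m j : ℚ) • Xm (U j)) + R ∧ ∀ v ∈ R.coeff.support, v c ≤ -2 := by
  classical
  induction T using Finset.induction_on with
  | empty => exact ⟨0, by simp, by simp⟩
  | @insert x s hx ih =>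
      obtain ⟨R, hR, hRs⟩ := ih (fun j hj => hU j (mem_insert_of_mem hj))
      obtain ⟨R', hR', hRs'⟩ := pow_decomp (hU x (mem_insert_self x s)) (m x)
      set L1 : A := (m x : ℚ) • Xm (U x) with hL1
      set L2 : A := ∑ j ∈ s, (m j : ℚ) • Xm (U j) with hL2
      have hL1s : ∀ v ∈ L1.coeff.support, v c ≤ -1 :=
        supp_smul_coord (fun v hv => by rw [supp_Xm v hv, hU x (mem_insert_self x s)])
      have hL2s : ∀ v ∈ L2.coeff.support, v c ≤ -1 :=
        supp_linpart (fun j hj => hU j (mem_insert_of_mem hj))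
      refine ⟨L1 * L2 - L1 * R - R' * L2 + R' * R + R' + R, ?_, ?_⟩
      · rw [Finset.prod_insert hx, Finset.sum_insert hx, hR, hR']
        ring
      · refine supp_add_coord (supp_add_coord (supp_add_coord (supp_sub_coord (supp_sub_coord ?_ ?_) ?_) ?_) (fun v hv => by have := hRs' v hv; omega)) hRs
        · intro v hv; have := supp_mul_coord hL1s hL2s v hv; omega
        · intro v hv; have := supp_mul_coord hL1s hRs v hv; omega
        · intro v hv; have := supp_mul_coord hRs' hL2s v hv; omega
        · intro v hv; have := supp_mul_coord hRs' hRs v hv; omega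

lemma ct_mul_eq_zero {f g : A} (h : ∀ u ∈ f.coeff.support, ∀ w ∈ g.coeff.support, u + w ≠ 0) :
    ct (f * g) = 0 := by
  refine ct_eq_zero_of_support fun hc => ?_
  obtain ⟨u, hu, w, hw, hs⟩ := mem_support_mul hc
  exact h u hu w hw hs


lemma pisingle_ne {i j : Fin n} (h : i ≠ j) :
    (Pi.single i 1 : Fin n → ℤ) ≠ Pi.single j 1 := by
  intro hc
  have := congrFun hc i
  rw [Pi.single_eq_same, Pi.single_eq_of_ne h] at this
  exact one_ne_zero this

lemma gen_ne_zero {i j : Fin n} (h : i ≠ j) :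
    (Pi.single i 1 - Pi.single j 1 : Fin n → ℤ) ≠ 0 :=
  sub_ne_zero.mpr (pisingle_ne h)

lemma one_sub_Xm_ne_zero {u : Fin n → ℤ} (hu : u ≠ 0) : (1 : A) - Xm u ≠ 0 := by
  intro hc
  have h0 : ((1 : A) - Xm u).coeff 0 = 0 := by rw [hc]; rfl
  rw [AddMonoidAlgebra.coeff_sub, Finsupp.sub_apply] at h0
  have h1 : (1 : A).coeff 0 = 1 := by
    rw [AddMonoidAlgebra.one_def]; exact Finsupp.single_eq_same
  rw [h1, Xm_apply, if_neg hu] at h0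
  norm_num at h0

lemma Xm_sub_Xm_ne_zero {u w : Fin n → ℤ} (h : u ≠ w) : Xm u - Xm w ≠ 0 := by
  intro hc
  have h0 : (Xm u - Xm w).coeff u = 0 := by rw [hc]; rfl
  rw [AddMonoidAlgebra.coeff_sub, Finsupp.sub_apply, Xm_apply, Xm_apply, if_pos rfl, if_neg (fun hh => h hh.symm)] at h0
  norm_num at h0

lemma fac_mul_Xm (i j : Fin n) :
    ((1 : A) - Xm (Pi.single i 1 - Pi.single j 1)) * Xm (Pi.single j 1)
      = Xm (Pi.single j 1) - Xm (Pi.single i 1) := by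
  rw [sub_mul, one_mul, ← Xm_add, sub_add_cancel]

lemma DS_erase {S : Finset (Fin n)} {a : Fin n → ℕ} {i : Fin n} (hi : i ∈ S) (hai : a i = 0) :
    DS S a = DS (S.erase i) a
      * ∏ j ∈ S.erase i, (1 - Xm (Pi.single j 1 - Pi.single i 1)) ^ a j := by
  classical
  unfold DS
  rw [← Finset.mul_prod_erase S _ hi]
  have h1 : ∏ j ∈ S.erase i, ((1 : A) - Xm (Pi.single i 1 - Pi.single j 1)) ^ a i = 1 := by
    simp [hai]
  rw [h1, one_mul]
  have h2 : ∀ i' ∈ S.erase i,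
      ∏ j ∈ S.erase i', ((1 : A) - Xm (Pi.single i' 1 - Pi.single j 1)) ^ a i'
        = ((1 : A) - Xm (Pi.single i' 1 - Pi.single i 1)) ^ a i'
          * ∏ j ∈ (S.erase i).erase i', ((1 : A) - Xm (Pi.single i' 1 - Pi.single j 1)) ^ a i' := by
    intro i' hi'
    have hii' : i ∈ S.erase i' := by
      rw [Finset.mem_erase] at *
      exact ⟨fun hc => hi'.1 hc.symm, hi⟩
    rw [← Finset.mul_prod_erase (S.erase i') _ hii', Finset.erase_right_comm]
  rw [Finset.prod_congr rfl h2, Finset.prod_mul_distrib, mul_comm]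

lemma DS_step {S : Finset (Fin n)} {a : Fin n → ℕ} {i : Fin n} (hi : i ∈ S) (hai : 1 ≤ a i) :
    DS S a = DS S (Function.update a i (a i - 1))
      * ∏ j ∈ S.erase i, (1 - Xm (Pi.single i 1 - Pi.single j 1)) := by
  classical
  have key : ∀ b : Fin n → ℕ, DS S b
      = (∏ j ∈ S.erase i, ((1:A) - Xm (Pi.single i 1 - Pi.single j 1)) ^ b i)
        * ∏ i' ∈ S.erase i, ∏ j ∈ S.erase i',
            ((1:A) - Xm (Pi.single i' 1 - Pi.single j 1)) ^ b i' := by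
    intro b
    unfold DS
    rw [← Finset.mul_prod_erase S _ hi]
  rw [key a, key (Function.update a i (a i - 1))]
  have h1 : ∏ i' ∈ S.erase i, ∏ j ∈ S.erase i',
      ((1:A) - Xm (Pi.single i' 1 - Pi.single j 1)) ^ (Function.update a i (a i - 1) i')
      = ∏ i' ∈ S.erase i, ∏ j ∈ S.erase i',
        ((1:A) - Xm (Pi.single i' 1 - Pi.single j 1)) ^ a i' := by
    refine Finset.prod_congr rfl fun i' hi' => ?_
    rw [Function.update_of_ne (Finset.mem_erase.mp hi').1]
  rw [h1]
  have h3 : ∏ j ∈ S.erase i, ((1:A) - Xm (Pi.single i 1 - Pi.single j 1)) ^ a i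
      = (∏ j ∈ S.erase i, ((1:A) - Xm (Pi.single i 1 - Pi.single j 1))
          ^ (Function.update a i (a i - 1) i))
        * ∏ j ∈ S.erase i, ((1:A) - Xm (Pi.single i 1 - Pi.single j 1)) := by
    rw [Function.update_self, ← Finset.prod_mul_distrib]
    refine Finset.prod_congr rfl fun j _ => ?_
    rw [← pow_succ, Nat.sub_add_cancel hai]
  rw [h3]
  ring


lemma DS_rec {S : Finset (Fin n)} {a : Fin n → ℕ} (hS : S.Nonempty) (ha : ∀ i ∈ S, 1 ≤ a i) :
    DS S a = ∑ i ∈ S, DS S (Function.update a i (a i - 1)) := by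
  classical
  set K := FractionRing (AddMonoidAlgebra ℚ (Fin n → ℤ)) with hK
  set φ : AddMonoidAlgebra ℚ (Fin n → ℤ) →+* K := algebraMap _ _ with hφdef
  have hφ : Function.Injective φ := IsFractionRing.injective _ _
  apply hφ
  rw [map_sum]
  set v : Fin n → K := fun i => φ (Xm (Pi.single i 1)) with hv
  have hvne : ∀ i, v i ≠ 0 := by
    intro i h
    exact Xm_ne_zero _ (hφ (by rw [map_zero]; exact h))
  have hsub : ∀ i j : Fin n, i ≠ j → v j - v i ≠ 0 := by
    intro i j hij h
    refine Xm_sub_Xm_ne_zero (pisingle_ne hij.symm) (hφ ?_)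
    rw [map_sub, map_zero]
    exact h
  have hinj : Set.InjOn v ↑S := by
    intro i _ j _ h
    by_contra hij
    exact hsub j i (fun hc => hij hc.symm) (by rw [h, sub_self])
  have lag := Lagrange.sum_basis hinj hS
  have lag0 : ∑ i ∈ S, Polynomial.eval (0 : K) (Lagrange.basis S v i) = 1 := by
    have := congrArg (Polynomial.eval (0 : K)) lag
    rwa [Polynomial.eval_finset_sum, Polynomial.eval_one] at this
  have evb : ∀ i ∈ S, Polynomial.eval (0 : K) (Lagrange.basis S v i)
      = ∏ j ∈ S.erase i, (v j * (v j - v i)⁻¹) := by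
    intro i hi
    rw [Lagrange.basis, Polynomial.eval_prod]
    refine Finset.prod_congr rfl fun j hj => ?_
    rw [Lagrange.basisDivisor]
    simp only [Polynomial.eval_mul, Polynomial.eval_C, Polynomial.eval_sub, Polynomial.eval_X]
    rw [zero_sub, show (v i - v j)⁻¹ = -(v j - v i)⁻¹ by rw [← neg_sub, inv_neg]]
    ring
  have step : ∀ i ∈ S, φ (DS S a) * Polynomial.eval (0 : K) (Lagrange.basis S v i)
      = φ (DS S (Function.update a i (a i - 1))) := by
    intro i hi
    rw [evb i hi, DS_step hi (ha i hi), map_mul, map_prod, mul_assoc, ← Finset.prod_mul_distrib]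
    have hone : ∏ j ∈ S.erase i,
        (φ (1 - Xm (Pi.single i 1 - Pi.single j 1)) * (v j * (v j - v i)⁻¹)) = 1 := by
      refine Finset.prod_eq_one fun j hj => ?_
      have hji : j ≠ i := (Finset.mem_erase.mp hj).1
      have hfac : φ (1 - Xm (Pi.single i 1 - Pi.single j 1)) * v j = v j - v i := by
        have := congrArg φ (fac_mul_Xm (n := n) i j)
        rw [map_mul, map_sub, map_sub, map_one] at this
        rw [map_sub, map_one]
        exact this
      rw [← mul_assoc, hfac, mul_inv_cancel₀ (hsub i j (fun hc => hji hc.symm))]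
    rw [hone, mul_one]
  calc φ (DS S a) = φ (DS S a) * ∑ i ∈ S, Polynomial.eval (0 : K) (Lagrange.basis S v i) := by
        rw [lag0, mul_one]
    _ = ∑ i ∈ S, φ (DS S a) * Polynomial.eval (0 : K) (Lagrange.basis S v i) := Finset.mul_sum _ _ _
    _ = ∑ i ∈ S, φ (DS S (Function.update a i (a i - 1))) := Finset.sum_congr rfl step

lemma sum_update_sub {S : Finset (Fin n)} {a : Fin n → ℕ} {i : Fin n} (hi : i ∈ S)
    (h : 1 ≤ a i) :
    ∑ j ∈ S, Function.update a i (a i - 1) j = (∑ j ∈ S, a j) - 1 := by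
  classical
  rw [← Finset.add_sum_erase S _ hi, ← Finset.add_sum_erase S a hi, Function.update_self]
  have he : ∑ j ∈ S.erase i, Function.update a i (a i - 1) j = ∑ j ∈ S.erase i, a j :=
    Finset.sum_congr rfl fun j hj => Function.update_of_ne (Finset.mem_erase.mp hj).1 _ a
  rw [he]
  omega

lemma multinomial_update {S : Finset (Fin n)} {a : Fin n → ℕ} {i : Fin n} (hi : i ∈ S)
    (h : 1 ≤ a i) :
    (∑ j ∈ S, a j) * Nat.multinomial S (Function.update a i (a i - 1))
      = a i * Nat.multinomial S a := by
  classical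
  set σ := ∑ j ∈ S, a j with hσ
  have hσ1 : 1 ≤ σ := le_trans h (Finset.single_le_sum (fun j _ => Nat.zero_le (a j)) hi)
  set P' := ∏ j ∈ S, Nat.factorial (Function.update a i (a i - 1) j) with hP'
  have hPP : ∏ j ∈ S, Nat.factorial (a j) = a i * P' := by
    rw [hP', ← Finset.mul_prod_erase S _ hi,
      ← Finset.mul_prod_erase S (fun j => Nat.factorial (Function.update a i (a i - 1) j)) hi]
    have he : ∏ j ∈ S.erase i, Nat.factorial (Function.update a i (a i - 1) j)
        = ∏ j ∈ S.erase i, Nat.factorial (a j) :=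
      Finset.prod_congr rfl fun j hj => by
        rw [Function.update_of_ne (Finset.mem_erase.mp hj).1]
    rw [he, Function.update_self, ← mul_assoc, Nat.mul_factorial_pred (by omega)]
  have h1 := Nat.multinomial_spec S (Function.update a i (a i - 1))
  have h2 := Nat.multinomial_spec S a
  rw [sum_update_sub hi h, ← hσ] at h1
  rw [← hσ] at h2
  have hP'pos : 0 < P' := Finset.prod_pos fun j _ => Nat.factorial_pos _
  apply Nat.eq_of_mul_eq_mul_left hP'pos
  calc P' * (σ * Nat.multinomial S (Function.update a i (a i - 1)))
      = σ * (P' * Nat.multinomial S (Function.update a i (a i - 1))) := by ring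
    _ = σ * Nat.factorial (σ - 1) := by rw [h1]
    _ = Nat.factorial σ := Nat.mul_factorial_pred (by omega)
    _ = (∏ j ∈ S, Nat.factorial (a j)) * Nat.multinomial S a := h2.symm
    _ = a i * P' * Nat.multinomial S a := by rw [hPP]
    _ = P' * (a i * Nat.multinomial S a) := by ring

lemma multinomial_erase {S : Finset (Fin n)} {a : Fin n → ℕ} {i : Fin n} (hi : i ∈ S)
    (h : a i = 0) : Nat.multinomial S a = Nat.multinomial (S.erase i) a := by
  classical
  conv_lhs => rw [← Finset.insert_erase hi]
  rw [Nat.multinomial_insert (Finset.notMem_erase i S), h]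
  simp


lemma apply_eq_zero_of_coordEQ {f : A} {c : Fin n} (hf : ∀ v ∈ f.coeff.support, v ∈ coordEQ c)
    {v : Fin n → ℤ} (hv : v c ≠ 0) : f.coeff v = 0 := by
  by_contra h
  exact hv (hf v (Finsupp.mem_support_iff.mpr h))

lemma Xm_mul_apply (w : Fin n → ℤ) (f : A) (y : Fin n → ℤ) : (Xm w * f).coeff y = f.coeff (-w + y) := by
  rw [Xm, AddMonoidAlgebra.coeff_single_mul_apply, one_mul]

lemma supp_DS_coordEQ {S : Finset (Fin n)} {a : Fin n → ℕ} {c : Fin n} (hc : c ∉ S) :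
    ∀ v ∈ (DS S a).coeff.support, v ∈ coordEQ c := by
  refine supp_DS fun i hi _ j hj => ?_
  have hic : i ≠ c := fun h => hc (h ▸ hi)
  have hjc : j ≠ c := fun h => hc (h ▸ (Finset.mem_erase.mp hj).2)
  show (Pi.single i 1 - Pi.single j 1 : Fin n → ℤ) c = 0
  rw [Pi.sub_apply, Pi.single_eq_of_ne (Ne.symm hic), Pi.single_eq_of_ne (Ne.symm hjc)]
  ring

/-- Key boundary reduction: if `a i = 0`, the constant term of `Xm w * DS S a` reduces to
the smaller index set `S.erase i` plus first-order correction terms. -/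
lemma boundary_formula {S : Finset (Fin n)} {a : Fin n → ℕ} {i : Fin n}
    (hi : i ∈ S) (hai : a i = 0) (w : Fin n → ℤ) (hwi : w i ≤ 1) :
    ct (Xm w * DS S a) = ct (Xm w * DS (S.erase i) a)
      - ∑ j ∈ S.erase i, (a j : ℚ)
          * (DS (S.erase i) a).coeff (-w - (Pi.single j 1 - Pi.single i 1)) := by
  classical
  obtain ⟨R, hG, hRs⟩ := prod_decomp (c := i) (T := S.erase i)
    (U := fun j => Pi.single j 1 - Pi.single i 1) (m := a)
    (fun j hj => by
      have hji : j ≠ i := (Finset.mem_erase.mp hj).1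
      show (Pi.single j 1 - Pi.single i 1 : Fin n → ℤ) i = -1
      rw [Pi.sub_apply, Pi.single_eq_same, Pi.single_eq_of_ne (Ne.symm hji)]
      ring)
  rw [DS_erase hi hai, hG]
  set D' := DS (S.erase i) a with hD'
  set L : A := ∑ j ∈ S.erase i, (a j : ℚ) • Xm (Pi.single j 1 - Pi.single i 1) with hL
  have hD's : ∀ v ∈ D'.coeff.support, v ∈ coordEQ i := supp_DS_coordEQ (Finset.notMem_erase i S)
  have expand : Xm w * (D' * (1 - L + R))
      = Xm w * D' - Xm w * (D' * L) + (Xm w * D') * R := by ring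
  rw [expand, ct_add, ct_sub]
  have hRterm : ct ((Xm w * D') * R) = 0 := by
    refine ct_mul_eq_zero fun u hu t ht => ?_
    obtain ⟨w', hw', u', hu', rfl⟩ := mem_support_mul hu
    have hw'w : w' = w := supp_Xm w' hw'
    have hu'i : u' i = 0 := hD's u' hu'
    have hti : t i ≤ -2 := hRs t ht
    intro hc
    have := congrFun hc i
    simp only [Pi.add_apply, Pi.zero_apply, hw'w] at this
    omega
  have hLterm : ct (Xm w * (D' * L)) = ∑ j ∈ S.erase i, (a j : ℚ)
      * D'.coeff (-w - (Pi.single j 1 - Pi.single i 1)) := by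
    have hdist : Xm w * (D' * L)
        = ∑ j ∈ S.erase i, (a j : ℚ) • ((Xm w * D') * Xm (Pi.single j 1 - Pi.single i 1)) := by
      rw [hL, Finset.mul_sum, Finset.mul_sum]
      refine Finset.sum_congr rfl fun j _ => ?_
      rw [mul_smul_comm, mul_smul_comm, mul_assoc]
    rw [hdist, ct_sum]
    refine Finset.sum_congr rfl fun j _ => ?_
    rw [ct_smul, ct_mul_Xm, Xm_mul_apply]
    congr 1
  rw [hRterm, hLterm, add_zero]


lemma Xm_zero : Xm (0 : Fin n → ℤ) = 1 := (AddMonoidAlgebra.one_def).symm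

lemma supp_DS_coordLE {S : Finset (Fin n)} {a : Fin n → ℕ} {r : Fin n} (har : a r = 0) :
    ∀ v ∈ (DS S a).coeff.support, v ∈ coordLE r := by
  refine supp_DS fun i hi hai0 j hj => ?_
  have hir : i ≠ r := fun h => hai0 (h ▸ har)
  show (Pi.single i 1 - Pi.single j 1 : Fin n → ℤ) r ≤ 0
  rw [Pi.sub_apply, Pi.single_eq_of_ne (Ne.symm hir)]
  rcases eq_or_ne j r with h | h
  · subst h; rw [Pi.single_eq_same]; omega
  · rw [Pi.single_eq_of_ne (Ne.symm h)]
    omega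

theorem key : ∀ (N : ℕ) (S : Finset (Fin n)) (a : Fin n → ℕ), (∑ i ∈ S, (a i + 1)) ≤ N →
    (ct (DS S a) = Nat.multinomial S a) ∧
    (∀ r ∈ S, ∀ s ∈ S, r ≠ s →
      ct (Xm (Pi.single s 1 - Pi.single r 1) * DS S a)
        = -((a r : ℚ) / (1 + (∑ i ∈ S, (a i : ℚ)) - a r)) * Nat.multinomial S a) := by
  intro N
  induction N using Nat.strong_induction_on with
  | _ N IH =>
  intro S a hm
  classical
  have IH' : ∀ (S' : Finset (Fin n)) (a' : Fin n → ℕ), (∑ i ∈ S', (a' i + 1)) < N →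
      (ct (DS S' a') = Nat.multinomial S' a') ∧
      (∀ r ∈ S', ∀ s ∈ S', r ≠ s →
        ct (Xm (Pi.single s 1 - Pi.single r 1) * DS S' a')
          = -((a' r : ℚ) / (1 + (∑ i ∈ S', (a' i : ℚ)) - a' r)) * Nat.multinomial S' a') :=
    fun S' a' h => IH _ h S' a' le_rfl
  constructor
  · -- Dyson part
    by_cases hz : ∃ i ∈ S, a i = 0
    · obtain ⟨i, hi, hai⟩ := hz
      have hmeas : ∑ j ∈ S.erase i, (a j + 1) < N := by
        have h1 : a i + 1 + ∑ j ∈ S.erase i, (a j + 1) = ∑ j ∈ S, (a j + 1) :=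
          Finset.add_sum_erase S (fun j => a j + 1) hi
        omega
      have hb := boundary_formula hi hai 0 (by simp)
      rw [Xm_zero, one_mul, one_mul] at hb
      have hD's := supp_DS_coordEQ (S := S.erase i) (a := a) (Finset.notMem_erase i S)
      have hzero : ∀ j ∈ S.erase i,
          (DS (S.erase i) a).coeff (-(0 : Fin n → ℤ) - (Pi.single j 1 - Pi.single i 1)) = 0 := by
        intro j hj
        refine apply_eq_zero_of_coordEQ hD's ?_
        have hji : j ≠ i := (Finset.mem_erase.mp hj).1
        show ((-(0 : Fin n → ℤ) - (Pi.single j 1 - Pi.single i 1)) : Fin n → ℤ) i ≠ 0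
        simp only [Pi.sub_apply, Pi.neg_apply, Pi.zero_apply, Pi.single_eq_same,
          Pi.single_eq_of_ne (Ne.symm hji)]
        omega
      rw [Finset.sum_congr rfl (fun j hj => by rw [hzero j hj, mul_zero]),
        Finset.sum_const_zero, sub_zero] at hb
      rw [hb, (IH' _ a hmeas).1, multinomial_erase hi hai]
    · push_neg at hz
      rcases Finset.eq_empty_or_nonempty S with rfl | hS
      · simp [DS, ct_one]
      · have hall : ∀ i ∈ S, 1 ≤ a i := fun i hi => Nat.one_le_iff_ne_zero.mpr (hz i hi)
        obtain ⟨r0, hr0⟩ := hS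
        have hσ1 : 1 ≤ ∑ j ∈ S, a j :=
          le_trans (hall r0 hr0) (Finset.single_le_sum (fun j _ => Nat.zero_le (a j)) hr0)
        have hmeasu : ∀ i ∈ S, ∑ j ∈ S, (Function.update a i (a i - 1) j + 1) < N := by
          intro i hi
          have h1 : ∑ j ∈ S, (Function.update a i (a i - 1) j + 1)
              = ∑ j ∈ S, Function.update a i (a i - 1) j + ∑ j ∈ S, 1 :=
            Finset.sum_add_distrib
          have h2 := sum_update_sub hi (hall i hi)
          have h3 : ∑ j ∈ S, (a j + 1) = ∑ j ∈ S, a j + ∑ j ∈ S, 1 := Finset.sum_add_distrib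
          have h4 : 1 ≤ a i := hall i hi
          have h5 : a i ≤ ∑ j ∈ S, a j :=
            Finset.single_le_sum (fun j _ => Nat.zero_le (a j)) hi
          omega
        rw [DS_rec ⟨r0, hr0⟩ hall, ct_sum]
        have hnat : ∑ i ∈ S, Nat.multinomial S (Function.update a i (a i - 1))
            = Nat.multinomial S a := by
          apply Nat.eq_of_mul_eq_mul_left (show 0 < ∑ j ∈ S, a j by omega)
          rw [Finset.mul_sum,
            Finset.sum_congr rfl (fun i hi => multinomial_update hi (hall i hi)),
            ← Finset.sum_mul]
        calc ∑ i ∈ S, ct (DS S (Function.update a i (a i - 1)))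
            = ∑ i ∈ S, ((Nat.multinomial S (Function.update a i (a i - 1)) : ℚ)) :=
              Finset.sum_congr rfl fun i hi => (IH' S _ (hmeasu i hi)).1
          _ = ((∑ i ∈ S, Nat.multinomial S (Function.update a i (a i - 1)) : ℕ) : ℚ) := by
              push_cast; ring
          _ = _ := by rw [hnat]
  · -- Sills part
    intro r hr s hs hrs
    by_cases har : a r = 0
    · have hsupp := supp_DS_coordLE (S := S) (a := a) har
      rw [ct_Xm_mul]
      have hval : (DS S a).coeff (-(Pi.single s 1 - Pi.single r 1)) = 0 := by
        by_contra h
        have hmem := hsupp _ (Finsupp.mem_support_iff.mpr h)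
        have : (-(Pi.single s 1 - Pi.single r 1) : Fin n → ℤ) r ≤ 0 := hmem
        rw [Pi.neg_apply, Pi.sub_apply, Pi.single_eq_same,
          Pi.single_eq_of_ne hrs] at this
        omega
      rw [hval, har]
      norm_num
    · replace har : 1 ≤ a r := Nat.one_le_iff_ne_zero.mpr har
      by_cases has : a s = 0
      · -- s-boundary
        have hmeas : ∑ j ∈ S.erase s, (a j + 1) < N := by
          have h1 : a s + 1 + ∑ j ∈ S.erase s, (a j + 1) = ∑ j ∈ S, (a j + 1) :=
            Finset.add_sum_erase S (fun j => a j + 1) hs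
          omega
        obtain ⟨hDY', hSI'⟩ := IH' (S.erase s) a hmeas
        have hrT : r ∈ S.erase s := Finset.mem_erase.mpr ⟨hrs, hr⟩
        have hb := boundary_formula hs has (Pi.single s 1 - Pi.single r 1)
          (by rw [Pi.sub_apply, Pi.single_eq_same, Pi.single_eq_of_ne (Ne.symm hrs)]; omega)
        have hD's := supp_DS_coordEQ (S := S.erase s) (a := a) (Finset.notMem_erase s S)
        have h1 : ct (Xm (Pi.single s 1 - Pi.single r 1) * DS (S.erase s) a) = 0 := by
          rw [ct_Xm_mul]
          refine apply_eq_zero_of_coordEQ hD's ?_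
          show (-(Pi.single s 1 - Pi.single r 1) : Fin n → ℤ) s ≠ 0
          rw [Pi.neg_apply, Pi.sub_apply, Pi.single_eq_same, Pi.single_eq_of_ne (Ne.symm hrs)]
          omega
        have e_r0 : (DS (S.erase s) a).coeff
            (-(Pi.single s 1 - Pi.single r 1) - (Pi.single r 1 - Pi.single s 1))
            = (Nat.multinomial (S.erase s) a : ℚ) := by
          have hv : (-(Pi.single s 1 - Pi.single r 1) - (Pi.single r 1 - Pi.single s 1)
              : Fin n → ℤ) = 0 := by abel
          rw [hv]
          exact hDY'
        have e_j : ∀ j ∈ (S.erase s).erase r, (DS (S.erase s) a).coeff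
            (-(Pi.single s 1 - Pi.single r 1) - (Pi.single j 1 - Pi.single s 1))
            = -((a r : ℚ) / (1 + (∑ i ∈ S.erase s, (a i : ℚ)) - a r))
                * Nat.multinomial (S.erase s) a := by
          intro j hj
          obtain ⟨hjr, hjT⟩ := Finset.mem_erase.mp hj
          have hv : (-(Pi.single s 1 - Pi.single r 1) - (Pi.single j 1 - Pi.single s 1)
              : Fin n → ℤ) = -(Pi.single j 1 - Pi.single r 1) := by abel
          rw [hv, ← ct_Xm_mul (DS (S.erase s) a) (Pi.single j 1 - Pi.single r 1)]
          exact hSI' r hrT j hjT (Ne.symm hjr)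
        rw [← Finset.add_sum_erase _ _ hrT, e_r0,
          Finset.sum_congr rfl (fun j hj => by rw [e_j j hj])] at hb
        rw [hb, h1, ← Finset.sum_mul]
        have hsum_erase : ∑ j ∈ (S.erase s).erase r, (a j : ℚ)
            = (∑ i ∈ S.erase s, (a i : ℚ)) - a r := by
          have h6 : (a r : ℚ) + ∑ j ∈ (S.erase s).erase r, (a j : ℚ)
              = ∑ j ∈ S.erase s, (a j : ℚ) :=
            Finset.add_sum_erase (S.erase s) (fun j => (a j : ℚ)) hrT
          linarith
        have hS_sum : ∑ i ∈ S, (a i : ℚ) = ∑ i ∈ S.erase s, (a i : ℚ) := by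
          have h6 : (a s : ℚ) + ∑ i ∈ S.erase s, (a i : ℚ) = ∑ i ∈ S, (a i : ℚ) :=
            Finset.add_sum_erase S (fun j => (a j : ℚ)) hs
          have h7 : (a s : ℚ) = 0 := by rw [has]; norm_num
          linarith
        have hC : (Nat.multinomial S a : ℚ) = Nat.multinomial (S.erase s) a := by
          rw [multinomial_erase hs has]
        set σ' := ∑ i ∈ S.erase s, (a i : ℚ) with hσ'
        have harσ : (a r : ℚ) ≤ σ' :=
          Finset.single_le_sum (f := fun j => (a j : ℚ)) (fun j _ => by positivity) hrT
        have hden : 1 + σ' - (a r : ℚ) ≠ 0 := by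
          have : (0:ℚ) ≤ (a r : ℚ) := by positivity
          intro hc; rw [sub_eq_zero] at hc; linarith
        rw [hsum_erase, hS_sum, hC]
        field_simp
        ring
      · replace has : 1 ≤ a s := Nat.one_le_iff_ne_zero.mpr has
        by_cases hz : ∃ i ∈ S, i ≠ r ∧ i ≠ s ∧ a i = 0
        · -- other-index boundary
          obtain ⟨i, hi, hir, his, hai⟩ := hz
          have hmeas : ∑ j ∈ S.erase i, (a j + 1) < N := by
            have h1 : a i + 1 + ∑ j ∈ S.erase i, (a j + 1) = ∑ j ∈ S, (a j + 1) :=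
              Finset.add_sum_erase S (fun j => a j + 1) hi
            omega
          obtain ⟨hDY', hSI'⟩ := IH' (S.erase i) a hmeas
          have hb := boundary_formula hi hai (Pi.single s 1 - Pi.single r 1)
            (by rw [Pi.sub_apply, Pi.single_eq_of_ne his,
                Pi.single_eq_of_ne hir]; omega)
          have hD's := supp_DS_coordEQ (S := S.erase i) (a := a) (Finset.notMem_erase i S)
          have hzero : ∀ j ∈ S.erase i, (DS (S.erase i) a).coeff
              (-(Pi.single s 1 - Pi.single r 1) - (Pi.single j 1 - Pi.single i 1)) = 0 := by
            intro j hj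
            refine apply_eq_zero_of_coordEQ hD's ?_
            have hji : j ≠ i := (Finset.mem_erase.mp hj).1
            show (-(Pi.single s 1 - Pi.single r 1) - (Pi.single j 1 - Pi.single i 1)
                : Fin n → ℤ) i ≠ 0
            simp only [Pi.sub_apply, Pi.neg_apply, Pi.single_eq_same,
              Pi.single_eq_of_ne (Ne.symm hji), Pi.single_eq_of_ne his,
              Pi.single_eq_of_ne hir]
            omega
          rw [Finset.sum_congr rfl (fun j hj => by rw [hzero j hj, mul_zero]),
            Finset.sum_const_zero, sub_zero] at hb
          have hrT : r ∈ S.erase i := Finset.mem_erase.mpr ⟨Ne.symm hir, hr⟩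
          have hsT : s ∈ S.erase i := Finset.mem_erase.mpr ⟨Ne.symm his, hs⟩
          rw [hb, hSI' r hrT s hsT hrs]
          have hS_sum : ∑ j ∈ S, (a j : ℚ) = ∑ j ∈ S.erase i, (a j : ℚ) := by
            have h6 : (a i : ℚ) + ∑ j ∈ S.erase i, (a j : ℚ) = ∑ j ∈ S, (a j : ℚ) :=
              Finset.add_sum_erase S (fun j => (a j : ℚ)) hi
            have h7 : (a i : ℚ) = 0 := by rw [hai]; norm_num
            linarith
          rw [hS_sum, multinomial_erase hi hai]
        · -- recursion
          push_neg at hz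
          have hall : ∀ i ∈ S, 1 ≤ a i := by
            intro i hi
            rcases eq_or_ne i r with rfl | hir
            · exact har
            rcases eq_or_ne i s with rfl | his
            · exact has
            exact Nat.one_le_iff_ne_zero.mpr (hz i hi hir his)
          have hσab : a r + a s ≤ ∑ j ∈ S, a j := by
            have hsub : ({r, s} : Finset (Fin n)) ⊆ S := by
              intro x hx
              rcases Finset.mem_insert.mp hx with rfl | hx
              · exact hr
              · rw [Finset.mem_singleton.mp hx]; exact hs
            calc a r + a s = ∑ j ∈ ({r, s} : Finset (Fin n)), a j :=
                  (Finset.sum_pair hrs).symm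
              _ ≤ ∑ j ∈ S, a j :=
                  Finset.sum_le_sum_of_subset hsub
          have hσ1 : 1 ≤ ∑ j ∈ S, a j := by omega
          have hmeasu : ∀ i ∈ S, ∑ j ∈ S, (Function.update a i (a i - 1) j + 1) < N := by
            intro i hi
            have h1 : ∑ j ∈ S, (Function.update a i (a i - 1) j + 1)
                = ∑ j ∈ S, Function.update a i (a i - 1) j + ∑ j ∈ S, 1 :=
              Finset.sum_add_distrib
            have h2 := sum_update_sub hi (hall i hi)
            have h3 : ∑ j ∈ S, (a j + 1) = ∑ j ∈ S, a j + ∑ j ∈ S, 1 := Finset.sum_add_distrib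
            omega
          rw [DS_rec ⟨r, hr⟩ hall, Finset.mul_sum, ct_sum]
          set σq := ∑ j ∈ S, (a j : ℚ) with hσq
          have hσq_nat : σq = ((∑ j ∈ S, a j : ℕ) : ℚ) := by push_cast; ring
          have hσq0 : σq ≠ 0 := by
            rw [hσq_nat]
            exact_mod_cast Nat.pos_iff_ne_zero.mp (by omega)
          have harq : (a r : ℚ) + 1 ≤ σq := by
            rw [hσq_nat]
            have : a r + 1 ≤ ∑ j ∈ S, a j := by omega
            exact_mod_cast this
          have hd1 : σq - (a r : ℚ) ≠ 0 := by intro hc; rw [sub_eq_zero] at hc; linarith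
          have hd2 : 1 + σq - (a r : ℚ) ≠ 0 := by intro hc; linarith
          set C := (Nat.multinomial S a : ℚ) with hC
          have hMi : ∀ i ∈ S, (Nat.multinomial S (Function.update a i (a i - 1)) : ℚ)
              = (a i : ℚ) * C / σq := by
            intro i hi
            have hcast := congrArg (Nat.cast : ℕ → ℚ) (multinomial_update hi (hall i hi))
            push_cast at hcast
            rw [eq_div_iff hσq0, hσq_nat]
            push_cast
            linarith
          have hupdsum : ∀ i ∈ S, ∑ j ∈ S, ((Function.update a i (a i - 1) j : ℕ) : ℚ)
              = σq - 1 := by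
            intro i hi
            have hcast := congrArg (Nat.cast : ℕ → ℚ) (sum_update_sub hi (hall i hi))
            push_cast [hσ1] at hcast
            rw [hσq]
            exact hcast
          have hterm : ∀ i ∈ S.erase r,
              ct (Xm (Pi.single s 1 - Pi.single r 1) * DS S (Function.update a i (a i - 1)))
                = -((a r : ℚ) / (σq - a r)) * ((a i : ℚ) * C / σq) := by
            intro i hiT
            obtain ⟨hirne, hiS⟩ := Finset.mem_erase.mp hiT
            have hIH := (IH' S _ (hmeasu i hiS)).2 r hr s hs hrs
            rw [hIH, hMi i hiS, hupdsum i hiS,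
              Function.update_of_ne (Ne.symm hirne)]
            congr 1
            rw [show 1 + (σq - 1) - (a r : ℚ) = σq - a r by ring]
          have htermr :
              ct (Xm (Pi.single s 1 - Pi.single r 1) * DS S (Function.update a r (a r - 1)))
                = -(((a r : ℚ) - 1) / (1 + σq - a r)) * ((a r : ℚ) * C / σq) := by
            have hIH := (IH' S _ (hmeasu r hr)).2 r hr s hs hrs
            rw [hIH, hMi r hr, hupdsum r hr, Function.update_self]
            have hcast : ((a r - 1 : ℕ) : ℚ) = (a r : ℚ) - 1 := by
              push_cast [har]; ring
            rw [hcast]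
            congr 2
            ring
          rw [← Finset.add_sum_erase _ _ hr, htermr,
            Finset.sum_congr rfl (fun i hi => hterm i hi)]
          have hsum_er : ∑ i ∈ S.erase r, (a i : ℚ) = σq - a r := by
            have h6 : (a r : ℚ) + ∑ i ∈ S.erase r, (a i : ℚ) = ∑ i ∈ S, (a i : ℚ) :=
              Finset.add_sum_erase S (fun j => (a j : ℚ)) hr
            rw [← hσq] at h6
            linarith
          have h8 : ∑ i ∈ S.erase r, -((a r : ℚ) / (σq - (a r : ℚ))) * ((a i : ℚ) * C / σq)
              = -((a r : ℚ) / (σq - (a r : ℚ))) * ((σq - (a r : ℚ)) * C / σq) := by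
            rw [← Finset.mul_sum, ← Finset.sum_div, ← Finset.sum_mul, hsum_er]
          rw [h8]
          field_simp
          ring


lemma final_sum (hn : 1 ≤ n) (b : Fin n → ℕ) (c0 : Fin n) (hc0 : (c0 : ℕ) = 0) :
    ct (∑ i ∈ Finset.univ.filter (fun i : Fin n => 1 ≤ (i : ℕ)),
        (b i : ℚ) • (Xm (Pi.single i 1 - Pi.single c0 1) * dyson b))
      = -((b c0 : ℚ) * ((∑ i, (b i : ℚ)) - b c0) / (1 + (∑ i, (b i : ℚ)) - b c0))
          * Nat.multinomial Finset.univ b := by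
  classical
  rw [ct_sum]
  have hkey := (key (∑ i, (b i + 1)) Finset.univ b le_rfl).2 c0 (Finset.mem_univ _)
  have hne : ∀ i : Fin n, 1 ≤ (i : ℕ) → c0 ≠ i := by
    intro i hi hc
    rw [← hc, hc0] at hi
    omega
  have hstep : ∀ i ∈ Finset.univ.filter (fun i : Fin n => 1 ≤ (i : ℕ)),
      ct ((b i : ℚ) • (Xm (Pi.single i 1 - Pi.single c0 1) * dyson b))
        = (b i : ℚ) * (-((b c0 : ℚ) / (1 + (∑ j, (b j : ℚ)) - b c0))
            * Nat.multinomial Finset.univ b) := by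
    intro i hi
    have h1 : 1 ≤ (i : ℕ) := (Finset.mem_filter.mp hi).2
    rw [dyson_eq, ct_smul, hkey i (Finset.mem_univ _) (hne i h1)]
  rw [Finset.sum_congr rfl hstep, ← Finset.sum_mul]
  have hT : Finset.univ.filter (fun i : Fin n => 1 ≤ (i : ℕ)) = Finset.univ.erase c0 := by
    ext i
    simp only [Finset.mem_filter, Finset.mem_erase, Finset.mem_univ, true_and, and_true]
    constructor
    · intro h hc; subst hc; omega
    · intro h
      have : (i : ℕ) ≠ (c0 : ℕ) := fun hc => h (Fin.ext hc)
      omega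
  have hsum_er : ∑ i ∈ Finset.univ.erase c0, (b i : ℚ) = (∑ i, (b i : ℚ)) - b c0 := by
    have h6 : (b c0 : ℚ) + ∑ i ∈ Finset.univ.erase c0, (b i : ℚ) = ∑ i, (b i : ℚ) :=
      Finset.add_sum_erase Finset.univ (fun j => (b j : ℚ)) (Finset.mem_univ c0)
    linarith
  rw [hT, hsum_er]
  rw [div_eq_mul_inv, div_eq_mul_inv]
  ring

end DysonAux

/-- With `b = a⟨2⟩` the vector `(a₁, a₃, …, aₙ)` (second entry of `a : Fin (n+1) → ℕ`
deleted, where the second index is `k = ⟨1,_⟩`), one has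
`CT a₁ ∑_{i=3}^n a_i (x_i/x₁) D_{n-1}(x⟨2⟩, a⟨2⟩) = -a₁²(a⁽¹⁾-a₂)/(1+a⁽¹⁾-a₂)·C_{n-1}(a⟨2⟩)`. -/
theorem ct_linear_boundary {n : ℕ} (hn : 2 ≤ n) (a : Fin (n + 1) → ℕ) :
    ct ((a 0 : ℚ) •
        ∑ i ∈ Finset.univ.filter (fun i : Fin n => 1 ≤ (i : ℕ)),
          ((a ∘ (⟨1, by omega⟩ : Fin (n + 1)).succAbove) i : ℚ) •
            (Xm (Pi.single i 1 - Pi.single (⟨0, by omega⟩ : Fin n) 1) *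
              dyson (a ∘ (⟨1, by omega⟩ : Fin (n + 1)).succAbove))) =
      -((a 0 : ℚ) ^ 2) *
          (((∑ j, (a j : ℚ)) - a 0 - a ⟨1, by omega⟩) /
            (1 + ((∑ j, (a j : ℚ)) - a 0 - a ⟨1, by omega⟩))) *
        Nat.multinomial Finset.univ (a ∘ (⟨1, by omega⟩ : Fin (n + 1)).succAbove) := by
  classical
  rw [DysonAux.ct_smul,
    DysonAux.final_sum (by omega) (a ∘ (⟨1, by omega⟩ : Fin (n + 1)).succAbove)
      (⟨0, by omega⟩ : Fin n) rfl]
  have hb0 : (a ∘ (⟨1, by omega⟩ : Fin (n + 1)).succAbove) (⟨0, by omega⟩ : Fin n) = a 0 := by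
    have h1 : (⟨1, by omega⟩ : Fin (n + 1)).succAbove (⟨0, by omega⟩ : Fin n) = 0 := by
      have hlt : Fin.castSucc (⟨0, by omega⟩ : Fin n) < (⟨1, by omega⟩ : Fin (n + 1)) := by
        rw [Fin.lt_def]
        simp
      rw [Fin.succAbove_of_castSucc_lt _ _ hlt]
      exact Fin.ext (by simp)
    simp only [Function.comp_apply, h1]
  have hσ : ∑ i, ((a ∘ (⟨1, by omega⟩ : Fin (n + 1)).succAbove) i : ℚ)
      = (∑ j, (a j : ℚ)) - a (⟨1, by omega⟩ : Fin (n + 1)) := by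
    have h2 := Fin.sum_univ_succAbove (fun j => (a j : ℚ)) (⟨1, by omega⟩ : Fin (n + 1))
    simp only [Function.comp_apply]
    linarith
  rw [hb0, hσ]
  have hnonneg : (0 : ℚ) ≤ (∑ j, (a j : ℚ)) - a (⟨1, by omega⟩ : Fin (n + 1)) - a 0 := by
    have hpair : a 0 + a (⟨1, by omega⟩ : Fin (n + 1)) ≤ ∑ j, a j := by
      have hsub : ({0, ⟨1, by omega⟩} : Finset (Fin (n + 1))) ⊆ Finset.univ :=
        Finset.subset_univ _
      have hne : (0 : Fin (n + 1)) ≠ ⟨1, by omega⟩ := by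
        intro hc
        have := congrArg Fin.val hc
        simp at this
      calc a 0 + a (⟨1, by omega⟩ : Fin (n + 1))
          = ∑ j ∈ ({0, ⟨1, by omega⟩} : Finset (Fin (n + 1))), a j :=
            (Finset.sum_pair hne).symm
        _ ≤ ∑ j, a j := Finset.sum_le_sum_of_subset hsub
    have : ((a 0 + a (⟨1, by omega⟩ : Fin (n + 1)) : ℕ) : ℚ) ≤ ((∑ j, a j : ℕ) : ℚ) := by
      exact_mod_cast hpair
    push_cast at this
    linarith
  have hden : 1 + ((∑ j, (a j : ℚ)) - a (⟨1, by omega⟩ : Fin (n + 1))) - (a 0 : ℚ) ≠ 0 := by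
    intro hc; linarith
  have hden2 : 1 + ((∑ j, (a j : ℚ)) - a 0 - a (⟨1, by omega⟩ : Fin (n + 1))) ≠ 0 := by
    intro hc; linarith
  field_simp
  ring
end
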